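/- arXiv:1904.02313 — 3 statements merged into one kernel-verified Lean document; each statement's English description precedes it below -/
import Mathlib

section
/- For nonnegative integers n and i, the number of symmetric Motzkin paths of length 2n with exactly i up steps equals C(n, i) * C(i, ⌊i/2⌋). -/
/-- A step of a Motzkin path: up `(1,1)`, flat `(1,0)`, or down `(1,-1)`. -/
inductive MStep : Type
  | up : MStep
  | flat : MStep
  | down : MStep
  deriving DecidableEq

/-- The vertical displacement of a Motzkin step. -/
def MStep.val : MStep → ℤ
  | .up => 1
  | .flat => 0
  | .down => -1

/-- A list of steps is a Motzkin path if every prefix has nonnegative height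
and the total height is `0` (i.e. it goes from `(0,0)` to `(n,0)` staying
weakly above the x-axis). -/
def IsMotzkinPath (l : List MStep) : Prop :=
  (∀ k, 0 ≤ ((l.take k).map MStep.val).sum) ∧ (l.map MStep.val).sum = 0

/-- Swapping up and down steps. -/
def MStep.swap : MStep → MStep
  | .up => .down
  | .flat => .flat
  | .down => .up

/-- A Motzkin path is symmetric if reading it backwards with up and down steps
interchanged (i.e. reflecting about the vertical line `x = n/2`) gives the same path. -/
def IsSymmetricPath (l : List MStep) : Prop :=
  l.reverse.map MStep.swap = l

/-- `motzkin n` is the number of Motzkin paths of length `n`. -/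
noncomputable def motzkin (n : ℕ) : ℕ :=
  Nat.card {l : List MStep // l.length = n ∧ IsMotzkinPath l}

/-- `symMotzkin n` is the number of symmetric Motzkin paths of length `n`. -/
noncomputable def symMotzkin (n : ℕ) : ℕ :=
  Nat.card {l : List MStep // l.length = n ∧ IsMotzkinPath l ∧ IsSymmetricPath l}

namespace SymAux

open List Finset

lemma swap_swap (s : MStep) : s.swap.swap = s := by cases s <;> rfl

lemma val_swap (s : MStep) : s.swap.val = -s.val := by cases s <;> rfl

/-- `hOkN h l = true` iff the path `l`, started at height `h`, stays (weakly) above 0. -/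
def hOkN : ℕ → List MStep → Bool
  | _, [] => true
  | h, .up :: t => hOkN (h+1) t
  | h, .flat :: t => hOkN h t
  | 0, .down :: _ => false
  | h+1, .down :: t => hOkN h t

lemma hOkN_nil (h : ℕ) : hOkN h [] = true := by cases h <;> rfl
lemma hOkN_up (h : ℕ) (t : List MStep) : hOkN h (.up :: t) = hOkN (h+1) t := by
  cases h <;> rfl
lemma hOkN_flat (h : ℕ) (t : List MStep) : hOkN h (.flat :: t) = hOkN h t := by
  cases h <;> rfl
lemma hOkN_down0 (t : List MStep) : hOkN 0 (.down :: t) = false := rfl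
lemma hOkN_down (h : ℕ) (t : List MStep) : hOkN (h+1) (.down :: t) = hOkN h t := rfl

lemma hOkN_iff : ∀ (l : List MStep) (h : ℕ),
    hOkN h l = true ↔ ∀ k, 0 ≤ (h : ℤ) + ((l.take k).map MStep.val).sum := by
  intro l
  induction l with
  | nil => intro h; simp [hOkN_nil, Int.natCast_nonneg]
  | cons s t ih =>
    intro h
    cases s with
    | up =>
      rw [hOkN_up, ih]
      constructor
      · intro H k
        match k with
        | 0 => simpa using Int.natCast_nonneg h
        | k+1 =>
          have := H k
          push_cast at this ⊢
          simp only [List.take_succ_cons, List.map_cons, List.sum_cons, MStep.val]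
          linarith
      · intro H k
        have := H (k+1)
        simp only [List.take_succ_cons, List.map_cons, List.sum_cons, MStep.val] at this
        push_cast
        linarith
    | flat =>
      rw [hOkN_flat, ih]
      constructor
      · intro H k
        match k with
        | 0 => simpa using Int.natCast_nonneg h
        | k+1 =>
          have := H k
          simp only [List.take_succ_cons, List.map_cons, List.sum_cons, MStep.val]
          linarith
      · intro H k
        have := H (k+1)
        simp only [List.take_succ_cons, List.map_cons, List.sum_cons, MStep.val] at this
        linarith
    | down =>
      match h with
      | 0 =>
        rw [hOkN_down0]
        simp only [Bool.false_eq_true, false_iff, not_forall]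
        refine ⟨1, ?_⟩
        simp [MStep.val]
      | h+1 =>
        rw [hOkN_down, ih]
        constructor
        · intro H k
          match k with
          | 0 => simpa using Int.natCast_nonneg (h+1)
          | k+1 =>
            have := H k
            push_cast at this ⊢
            simp only [List.take_succ_cons, List.map_cons, List.sum_cons, MStep.val]
            linarith
        · intro H k
          have := H (k+1)
          simp only [List.take_succ_cons, List.map_cons, List.sum_cons, MStep.val] at this
          push_cast at this ⊢
          linarith

/-- The finset of all paths of length `n` that stay weakly above `0` when started
at height `h`. -/
def M : ℕ → ℕ → Finset (List MStep)
  | 0, _ => {[]}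
  | n+1, h =>
    ((M n (h+1)).image (MStep.up :: ·)) ∪ ((M n h).image (MStep.flat :: ·)) ∪
      (match h with
       | 0 => ∅
       | h'+1 => (M n h').image (MStep.down :: ·))

lemma M_zero (h : ℕ) : M 0 h = {[]} := rfl

lemma M_succ_zero (n : ℕ) : M (n+1) 0 =
    ((M n 1).image (MStep.up :: ·)) ∪ ((M n 0).image (MStep.flat :: ·)) := by
  show _ ∪ _ ∪ ∅ = _
  rw [Finset.union_empty]

lemma M_succ_succ (n h : ℕ) : M (n+1) (h+1) =
    ((M n (h+2)).image (MStep.up :: ·)) ∪ ((M n (h+1)).image (MStep.flat :: ·)) ∪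
      ((M n h).image (MStep.down :: ·)) := rfl

lemma mem_M : ∀ (n h : ℕ) (l : List MStep), l ∈ M n h ↔ l.length = n ∧ hOkN h l = true := by
  intro n
  induction n with
  | zero =>
    intro h l
    rw [M_zero]
    simp only [Finset.mem_singleton]
    constructor
    · rintro rfl; exact ⟨rfl, hOkN_nil h⟩
    · rintro ⟨hl, -⟩; exact List.length_eq_zero_iff.mp hl
  | succ n ih =>
    intro h l
    cases h with
    | zero =>
      rw [M_succ_zero]
      cases l with
      | nil => simp [hOkN_nil]
      | cons s t =>
        cases s <;>
          simp [ih, hOkN_up, hOkN_flat, hOkN_down0, List.cons.injEq]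
    | succ h =>
      rw [M_succ_succ]
      cases l with
      | nil => simp [hOkN_nil]
      | cons s t =>
        cases s <;>
          simp [ih, hOkN_up, hOkN_flat, hOkN_down, List.cons.injEq]

lemma cons_injective (a : MStep) : Function.Injective (a :: ·) := by
  intro x y h
  injection h

lemma disj_image {a b : MStep} (hab : a ≠ b) (s t : Finset (List MStep)) :
    Disjoint (s.image (a :: ·)) (t.image (b :: ·)) := by
  rw [Finset.disjoint_left]
  rintro l hl hl'
  obtain ⟨x, -, rfl⟩ := Finset.mem_image.mp hl
  obtain ⟨y, -, hy⟩ := Finset.mem_image.mp hl'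
  exact hab (by injection hy.symm)

lemma card_filter_image (s : Finset (List MStep)) (a : MStep) (p : List MStep → Prop)
    [DecidablePred p] :
    ((s.image (a :: ·)).filter p).card = (s.filter (fun l => p (a :: l))).card := by
  rw [Finset.filter_image]
  exact Finset.card_image_of_injective _ (cons_injective a)

lemma card_filter_M_succ_zero (n : ℕ) (p : List MStep → Prop) [DecidablePred p] :
    ((M (n+1) 0).filter p).card =
      ((M n 1).filter (fun l => p (.up :: l))).card +
      ((M n 0).filter (fun l => p (.flat :: l))).card := by
  rw [M_succ_zero, Finset.filter_union,
    Finset.card_union_of_disjoint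
      (Finset.disjoint_filter_filter (disj_image (by simp) _ _)),
    card_filter_image, card_filter_image]

lemma card_filter_M_succ_succ (n h : ℕ) (p : List MStep → Prop) [DecidablePred p] :
    ((M (n+1) (h+1)).filter p).card =
      ((M n (h+2)).filter (fun l => p (.up :: l))).card +
      ((M n (h+1)).filter (fun l => p (.flat :: l))).card +
      ((M n h).filter (fun l => p (.down :: l))).card := by
  rw [M_succ_succ, Finset.filter_union, Finset.filter_union,
    Finset.card_union_of_disjoint (by
      rw [Finset.disjoint_union_left]
      exact ⟨Finset.disjoint_filter_filter (disj_image (by simp) _ _),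
        Finset.disjoint_filter_filter (disj_image (by simp) _ _)⟩),
    Finset.card_union_of_disjoint (Finset.disjoint_filter_filter (disj_image (by simp) _ _)),
    card_filter_image, card_filter_image, card_filter_image]

/-- `cM n h i` : the number of valid-from-`h` paths of length `n` with
exactly `i` non-flat steps. -/
def cM (n h i : ℕ) : ℕ :=
  ((M n h).filter (fun l => l.count .up + l.count .down = i)).card

/-- `gM h i u` : the number of flat-free valid-from-`h` paths of length `i` with
exactly `u` up steps. -/
def gM (h i u : ℕ) : ℕ :=
  ((M i h).filter (fun l => l.count .up + l.count .down = i ∧ l.count .up = u)).card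

lemma count_cons_up (t : List MStep) :
    (MStep.up :: t).count .up + (MStep.up :: t).count .down
      = (t.count .up + t.count .down) + 1 := by
  simp [List.count_cons]
  omega

lemma count_cons_flat (t : List MStep) :
    (MStep.flat :: t).count .up + (MStep.flat :: t).count .down
      = t.count .up + t.count .down := by
  simp [List.count_cons]

lemma count_cons_down (t : List MStep) :
    (MStep.down :: t).count .up + (MStep.down :: t).count .down
      = (t.count .up + t.count .down) + 1 := by
  simp [List.count_cons]
  omega

lemma count_up_cons_up (t : List MStep) : (MStep.up :: t).count .up = t.count .up + 1 := by
  simp [List.count_cons]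
lemma count_up_cons_flat (t : List MStep) : (MStep.flat :: t).count .up = t.count .up := by
  simp [List.count_cons]
lemma count_up_cons_down (t : List MStep) : (MStep.down :: t).count .up = t.count .up := by
  simp [List.count_cons]

lemma counts_le_length (l : List MStep) : l.count .up + l.count .down ≤ l.length := by
  induction l with
  | nil => simp
  | cons s t ih =>
    cases s <;> simp [List.count_cons] <;> omega

lemma cM_zero (h i : ℕ) : cM 0 h i = if i = 0 then 1 else 0 := by
  unfold cM
  rw [M_zero, Finset.filter_singleton]
  rcases eq_or_ne i 0 with rfl | hi
  · simp
  · simp [Ne.symm hi, if_neg hi]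

lemma cM_succ_zero_i_zero (n : ℕ) : cM (n+1) 0 0 = cM n 0 0 := by
  unfold cM
  rw [card_filter_M_succ_zero]
  have h1 : ((M n 1).filter (fun l => (MStep.up :: l).count MStep.up + (MStep.up :: l).count MStep.down = 0)) = ∅ := by
    refine Finset.filter_eq_empty_iff.mpr ?_
    intro l _
    rw [count_cons_up]
    omega
  have h2 : ((M n 0).filter (fun l => (MStep.flat :: l).count MStep.up + (MStep.flat :: l).count MStep.down = 0))
      = ((M n 0).filter (fun l => l.count MStep.up + l.count MStep.down = 0)) := by
    refine Finset.filter_congr ?_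
    intro l _
    rw [count_cons_flat]
  rw [h1, h2]
  simp

lemma cM_succ_succ_i_zero (n h : ℕ) : cM (n+1) (h+1) 0 = cM n (h+1) 0 := by
  unfold cM
  rw [card_filter_M_succ_succ]
  have h1 : ((M n (h+2)).filter (fun l => (MStep.up :: l).count MStep.up + (MStep.up :: l).count MStep.down = 0)) = ∅ := by
    refine Finset.filter_eq_empty_iff.mpr ?_
    intro l _
    rw [count_cons_up]
    omega
  have h3 : ((M n h).filter (fun l => (MStep.down :: l).count MStep.up + (MStep.down :: l).count MStep.down = 0)) = ∅ := by
    refine Finset.filter_eq_empty_iff.mpr ?_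
    intro l _
    rw [count_cons_down]
    omega
  have h2 : ((M n (h+1)).filter (fun l => (MStep.flat :: l).count MStep.up + (MStep.flat :: l).count MStep.down = 0))
      = ((M n (h+1)).filter (fun l => l.count MStep.up + l.count MStep.down = 0)) := by
    refine Finset.filter_congr ?_
    intro l _
    rw [count_cons_flat]
  rw [h1, h2, h3]
  simp

lemma cM_succ_zero (n i : ℕ) : cM (n+1) 0 (i+1) = cM n 0 (i+1) + cM n 1 i := by
  unfold cM
  rw [card_filter_M_succ_zero]
  have h1 : ((M n 1).filter (fun l => (MStep.up :: l).count MStep.up + (MStep.up :: l).count MStep.down = i+1))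
      = ((M n 1).filter (fun l => l.count MStep.up + l.count MStep.down = i)) := by
    refine Finset.filter_congr ?_
    intro l _
    rw [count_cons_up]
    constructor <;> omega
  have h2 : ((M n 0).filter (fun l => (MStep.flat :: l).count MStep.up + (MStep.flat :: l).count MStep.down = i+1))
      = ((M n 0).filter (fun l => l.count MStep.up + l.count MStep.down = i+1)) := by
    refine Finset.filter_congr ?_
    intro l _
    rw [count_cons_flat]
  rw [h1, h2]
  omega

lemma cM_succ_succ (n h i : ℕ) :
    cM (n+1) (h+1) (i+1) = cM n (h+1) (i+1) + cM n (h+2) i + cM n h i := by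
  unfold cM
  rw [card_filter_M_succ_succ]
  have h1 : ((M n (h+2)).filter (fun l => (MStep.up :: l).count MStep.up + (MStep.up :: l).count MStep.down = i+1))
      = ((M n (h+2)).filter (fun l => l.count MStep.up + l.count MStep.down = i)) := by
    refine Finset.filter_congr ?_
    intro l _
    rw [count_cons_up]
    constructor <;> omega
  have h2 : ((M n (h+1)).filter (fun l => (MStep.flat :: l).count MStep.up + (MStep.flat :: l).count MStep.down = i+1))
      = ((M n (h+1)).filter (fun l => l.count MStep.up + l.count MStep.down = i+1)) := by
    refine Finset.filter_congr ?_
    intro l _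
    rw [count_cons_flat]
  have h3 : ((M n h).filter (fun l => (MStep.down :: l).count MStep.up + (MStep.down :: l).count MStep.down = i+1))
      = ((M n h).filter (fun l => l.count MStep.up + l.count MStep.down = i)) := by
    refine Finset.filter_congr ?_
    intro l _
    rw [count_cons_down]
    constructor <;> omega
  rw [h1, h2, h3]
  omega

lemma cM_eq_zero_of_lt : ∀ n h i, n < i → cM n h i = 0 := by
  intro n
  induction n with
  | zero =>
    intro h i hi
    rw [cM_zero]
    simp only [if_neg (by omega : ¬ i = 0)]
  | succ n ih =>
    intro h i hi
    match i, hi with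
    | i+1, hi =>
      cases h with
      | zero =>
        rw [cM_succ_zero, ih 0 (i+1) (by omega), ih 1 i (by omega)]
      | succ h =>
        rw [cM_succ_succ, ih (h+1) (i+1) (by omega), ih (h+2) i (by omega),
          ih h i (by omega)]

/-- `aN h i` : the number of flat-free valid paths of length `i` from height `h`. -/
def aN (h i : ℕ) : ℕ := cM i h i

lemma aN_zero (h : ℕ) : aN h 0 = 1 := by
  unfold aN; rw [cM_zero]; simp

lemma aN_succ_zero (i : ℕ) : aN 0 (i+1) = aN 1 i := by
  unfold aN
  rw [cM_succ_zero, cM_eq_zero_of_lt i 0 (i+1) (by omega)]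
  omega

lemma aN_succ_succ (h i : ℕ) : aN (h+1) (i+1) = aN (h+2) i + aN h i := by
  unfold aN
  rw [cM_succ_succ, cM_eq_zero_of_lt i (h+1) (i+1) (by omega)]
  omega

/-- Stage B: factoring out the flat steps. -/
lemma cM_eq : ∀ n h i, cM n h i = n.choose i * aN h i := by
  intro n
  induction n with
  | zero =>
    intro h i
    rcases eq_or_ne i 0 with rfl | hi
    · rw [cM_zero]; simp [aN_zero]
    · rw [cM_zero, Nat.choose_eq_zero_of_lt (by omega)]
      simp [hi]
  | succ n ih =>
    intro h i
    match i with
    | 0 =>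
      cases h with
      | zero => rw [cM_succ_zero_i_zero, ih, Nat.choose_zero_right, Nat.choose_zero_right]
      | succ h => rw [cM_succ_succ_i_zero, ih, Nat.choose_zero_right, Nat.choose_zero_right]
    | i+1 =>
      have pascal : (n+1).choose (i+1) = n.choose i + n.choose (i+1) :=
        Nat.choose_succ_succ' n i
      cases h with
      | zero =>
        rw [cM_succ_zero, ih, ih, aN_succ_zero, pascal]
        ring
      | succ h =>
        rw [cM_succ_succ, ih, ih, ih, aN_succ_succ, pascal]
        ring

lemma gM_len_zero (h u : ℕ) : gM h 0 u = if u = 0 then 1 else 0 := by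
  unfold gM
  rw [M_zero, Finset.filter_singleton]
  rcases eq_or_ne u 0 with rfl | hu
  · simp
  · simp [Ne.symm hu, if_neg hu]

lemma filter_big_empty (n h i : ℕ) (hn : n < i)
    (q : List MStep → Prop) [DecidablePred q] :
    ((M n h).filter (fun l => (l.count MStep.up + l.count MStep.down = i) ∧ q l)) = ∅ := by
  refine Finset.filter_eq_empty_iff.mpr ?_
  intro l hl
  have hlen := ((mem_M n h l).mp hl).1
  have hle := counts_le_length l
  rw [hlen] at hle
  rintro ⟨h1, -⟩
  omega

lemma gM_succ_zero_u_zero (i : ℕ) : gM 0 (i+1) 0 = 0 := by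
  unfold gM
  rw [card_filter_M_succ_zero]
  have h1 : ((M i 1).filter (fun l =>
      ((MStep.up :: l).count MStep.up + (MStep.up :: l).count MStep.down = i+1) ∧
        (MStep.up :: l).count MStep.up = 0)) = ∅ := by
    refine Finset.filter_eq_empty_iff.mpr ?_
    intro l _
    rw [count_cons_up, count_up_cons_up]
    rintro ⟨-, h⟩
    omega
  have h2 : ((M i 0).filter (fun l =>
      ((MStep.flat :: l).count MStep.up + (MStep.flat :: l).count MStep.down = i+1) ∧
        (MStep.flat :: l).count MStep.up = 0)) = ∅ := by
    refine Finset.filter_eq_empty_iff.mpr ?_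
    intro l hl
    have hlen := ((mem_M i 0 l).mp hl).1
    have hle := counts_le_length l
    rw [count_cons_flat, count_up_cons_flat]
    rintro ⟨h, -⟩
    omega
  rw [h1, h2]
  simp

lemma gM_succ_succ_u_zero (h i : ℕ) : gM (h+1) (i+1) 0 = gM h i 0 := by
  unfold gM
  rw [card_filter_M_succ_succ]
  have h1 : ((M i (h+2)).filter (fun l =>
      ((MStep.up :: l).count MStep.up + (MStep.up :: l).count MStep.down = i+1) ∧
        (MStep.up :: l).count MStep.up = 0)) = ∅ := by
    refine Finset.filter_eq_empty_iff.mpr ?_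
    intro l _
    rw [count_cons_up, count_up_cons_up]
    rintro ⟨-, h⟩
    omega
  have h2 : ((M i (h+1)).filter (fun l =>
      ((MStep.flat :: l).count MStep.up + (MStep.flat :: l).count MStep.down = i+1) ∧
        (MStep.flat :: l).count MStep.up = 0)) = ∅ := by
    refine Finset.filter_eq_empty_iff.mpr ?_
    intro l hl
    have hlen := ((mem_M i (h+1) l).mp hl).1
    have hle := counts_le_length l
    rw [count_cons_flat, count_up_cons_flat]
    rintro ⟨hc, -⟩
    omega
  have h3 : ((M i h).filter (fun l =>
      ((MStep.down :: l).count MStep.up + (MStep.down :: l).count MStep.down = i+1) ∧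
        (MStep.down :: l).count MStep.up = 0)) =
      ((M i h).filter (fun l =>
        (l.count MStep.up + l.count MStep.down = i) ∧ l.count MStep.up = 0)) := by
    refine Finset.filter_congr ?_
    intro l _
    rw [count_cons_down, count_up_cons_down]
    constructor <;> (rintro ⟨a, b⟩; exact ⟨by omega, b⟩)
  rw [h1, h2, h3]
  simp

lemma gM_succ_zero (i u : ℕ) : gM 0 (i+1) (u+1) = gM 1 i u := by
  unfold gM
  rw [card_filter_M_succ_zero]
  have h1 : ((M i 1).filter (fun l =>
      ((MStep.up :: l).count MStep.up + (MStep.up :: l).count MStep.down = i+1) ∧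
        (MStep.up :: l).count MStep.up = u+1)) =
      ((M i 1).filter (fun l =>
        (l.count MStep.up + l.count MStep.down = i) ∧ l.count MStep.up = u)) := by
    refine Finset.filter_congr ?_
    intro l _
    rw [count_cons_up, count_up_cons_up]
    constructor <;> (rintro ⟨a, b⟩; exact ⟨by omega, by omega⟩)
  have h2 : ((M i 0).filter (fun l =>
      ((MStep.flat :: l).count MStep.up + (MStep.flat :: l).count MStep.down = i+1) ∧
        (MStep.flat :: l).count MStep.up = u+1)) = ∅ := by
    refine Finset.filter_eq_empty_iff.mpr ?_
    intro l hl
    have hlen := ((mem_M i 0 l).mp hl).1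
    have hle := counts_le_length l
    rw [count_cons_flat, count_up_cons_flat]
    rintro ⟨hc, -⟩
    omega
  rw [h1, h2]
  simp

lemma gM_succ_succ (h i u : ℕ) : gM (h+1) (i+1) (u+1) = gM (h+2) i u + gM h i (u+1) := by
  unfold gM
  rw [card_filter_M_succ_succ]
  have h1 : ((M i (h+2)).filter (fun l =>
      ((MStep.up :: l).count MStep.up + (MStep.up :: l).count MStep.down = i+1) ∧
        (MStep.up :: l).count MStep.up = u+1)) =
      ((M i (h+2)).filter (fun l =>
        (l.count MStep.up + l.count MStep.down = i) ∧ l.count MStep.up = u)) := by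
    refine Finset.filter_congr ?_
    intro l _
    rw [count_cons_up, count_up_cons_up]
    constructor <;> (rintro ⟨a, b⟩; exact ⟨by omega, by omega⟩)
  have h2 : ((M i (h+1)).filter (fun l =>
      ((MStep.flat :: l).count MStep.up + (MStep.flat :: l).count MStep.down = i+1) ∧
        (MStep.flat :: l).count MStep.up = u+1)) = ∅ := by
    refine Finset.filter_eq_empty_iff.mpr ?_
    intro l hl
    have hlen := ((mem_M i (h+1) l).mp hl).1
    have hle := counts_le_length l
    rw [count_cons_flat, count_up_cons_flat]
    rintro ⟨hc, -⟩
    omega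
  have h3 : ((M i h).filter (fun l =>
      ((MStep.down :: l).count MStep.up + (MStep.down :: l).count MStep.down = i+1) ∧
        (MStep.down :: l).count MStep.up = u+1)) =
      ((M i h).filter (fun l =>
        (l.count MStep.up + l.count MStep.down = i) ∧ l.count MStep.up = u+1)) := by
    refine Finset.filter_congr ?_
    intro l _
    rw [count_cons_down, count_up_cons_down]
    constructor <;> (rintro ⟨a, b⟩; exact ⟨by omega, b⟩)
  rw [h1, h2, h3]
  simp

lemma gM_eq_zero : ∀ i h u, 2*u + h < i → gM h i u = 0 := by
  intro i
  induction i with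
  | zero => intro h u hu; omega
  | succ i ih =>
    intro h u hu
    match u, h with
    | 0, 0 => exact gM_succ_zero_u_zero i
    | 0, h+1 => rw [gM_succ_succ_u_zero]; exact ih h 0 (by omega)
    | u+1, 0 => rw [gM_succ_zero]; exact ih 1 u (by omega)
    | u+1, h+1 =>
      rw [gM_succ_succ, ih (h+2) u (by omega), ih h (u+1) (by omega)]

lemma gM_closed : ∀ i h u, i ≤ 2*u + h → gM h i u + i.choose (u+h+1) = i.choose u := by
  intro i
  induction i with
  | zero =>
    intro h u _
    match u with
    | 0 => rw [gM_len_zero]; simp [Nat.choose_eq_zero_of_lt (by omega : 0 < 0 + h + 1)]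
    | u+1 =>
      rw [gM_len_zero]
      rw [Nat.choose_eq_zero_of_lt (by omega : 0 < u+1+h+1),
        Nat.choose_eq_zero_of_lt (by omega : 0 < u+1)]
      simp
  | succ i ih =>
    intro h u hu
    match u, h with
    | 0, 0 => omega
    | 0, h+1 =>
      rw [gM_succ_succ_u_zero]
      have key := ih h 0 (by omega)
      have c1 : i.choose (0+h+1) = 0 := Nat.choose_eq_zero_of_lt (by omega)
      have c2 : (i+1).choose (0+(h+1)+1) = 0 := Nat.choose_eq_zero_of_lt (by omega)
      rw [c2]
      rw [c1] at key
      simp only [Nat.choose_zero_right, Nat.add_zero] at key ⊢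
      omega
    | u+1, 0 =>
      rw [gM_succ_zero]
      rw [show u+1+0+1 = u+2 from by omega]
      have key := ih 1 u (by omega)
      rw [show u+1+1 = u+2 from by omega] at key
      have p1 : (i+1).choose (u+2) = i.choose (u+1) + i.choose (u+2) :=
        Nat.choose_succ_succ i (u+1)
      have p2 : (i+1).choose (u+1) = i.choose u + i.choose (u+1) :=
        Nat.choose_succ_succ i u
      omega
    | u+1, h+1 =>
      rw [gM_succ_succ]
      rw [show u+1+(h+1)+1 = u+h+3 from by omega]
      have key1 := ih (h+2) u (by omega)
      have key2 := ih h (u+1) (by omega)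
      rw [show u+(h+2)+1 = u+h+3 from by omega] at key1
      rw [show u+1+h+1 = u+h+2 from by omega] at key2
      have p1 : (i+1).choose (u+h+3) = i.choose (u+h+2) + i.choose (u+h+3) :=
        Nat.choose_succ_succ i (u+h+2)
      have p2 : (i+1).choose (u+1) = i.choose u + i.choose (u+1) :=
        Nat.choose_succ_succ i u
      omega

lemma gM_telescope : ∀ (i m t : ℕ), t + m = i + 1 → i ≤ 2*t →
    (∑ u ∈ Finset.Ico t (i+1), gM 0 i u) = i.choose t := by
  intro i m
  induction m with
  | zero =>
    intro t ht _
    have : t = i + 1 := by omega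
    subst this
    rw [Finset.Ico_self, Finset.sum_empty, Nat.choose_eq_zero_of_lt (by omega)]
  | succ m ih =>
    intro t ht hle
    rw [Finset.sum_eq_sum_Ico_succ_bot (by omega : t < i + 1)]
    rw [ih (t+1) (by omega) (by omega)]
    have key := gM_closed i 0 t (by omega)
    have e : t + 0 + 1 = t + 1 := by omega
    rw [e] at key
    omega

lemma aN_fiber (i : ℕ) : aN 0 i = ∑ u ∈ Finset.range (i+1), gM 0 i u := by
  unfold aN cM gM
  rw [Finset.card_eq_sum_card_fiberwise
    (f := fun l => l.count MStep.up) (t := Finset.range (i+1)) ?mem]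
  case mem =>
    intro l hl
    have hlen := ((mem_M i 0 l).mp (Finset.mem_filter.mp hl).1).1
    have : l.count MStep.up ≤ l.length := List.count_le_length
    simp only [Finset.mem_coe, Finset.mem_range]
    omega
  refine Finset.sum_congr rfl ?_
  intro u _
  rw [Finset.filter_filter]

lemma aN_zero_eq (i : ℕ) : aN 0 i = i.choose (i / 2) := by
  set t := (i+1)/2 with ht
  have h1 : aN 0 i = ∑ u ∈ Finset.range (i+1), gM 0 i u := aN_fiber i
  rw [h1, Finset.range_eq_Ico,
    ← Finset.sum_Ico_consecutive _ (by omega : 0 ≤ t) (by omega : t ≤ i+1)]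
  have h2 : (∑ u ∈ Finset.Ico 0 t, gM 0 i u) = 0 := by
    refine Finset.sum_eq_zero ?_
    intro u hu
    rw [Finset.mem_Ico] at hu
    exact gM_eq_zero i 0 u (by omega)
  rw [h2, gM_telescope i (i + 1 - t) t (by omega) (by omega)]
  have : i - i/2 = t := by omega
  rw [← this, Nat.choose_symm (by omega)]
  simp

/-- Reflection of a half-path: reverse and swap up/down. -/
def refl2 (w : List MStep) : List MStep := (w.map MStep.swap).reverse

lemma swap_injective : Function.Injective MStep.swap := by
  intro a b h
  cases a <;> cases b <;> first | rfl | (exact absurd h (by simp [MStep.swap]))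

lemma sum_val_map_swap (w : List MStep) :
    ((w.map MStep.swap).map MStep.val).sum = -((w.map MStep.val).sum) := by
  induction w with
  | nil => simp
  | cons s t ih =>
    simp only [List.map_cons, List.sum_cons, val_swap, ih]
    ring

lemma sum_val_refl2 (w : List MStep) :
    ((refl2 w).map MStep.val).sum = -((w.map MStep.val).sum) := by
  rw [refl2, List.map_reverse, List.sum_reverse, sum_val_map_swap]

lemma count_up_refl2 (w : List MStep) : (refl2 w).count .up = w.count .down := by
  rw [refl2, List.count_reverse]
  have : (MStep.up : MStep) = MStep.swap .down := rfl
  rw [this, List.count_map_of_injective _ _ swap_injective]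

lemma length_refl2 (w : List MStep) : (refl2 w).length = w.length := by
  simp [refl2]

lemma sum_drop (Y : List ℤ) (k : ℕ) : (Y.drop k).sum = Y.sum - (Y.take k).sum := by
  have h := congrArg List.sum (List.take_append_drop k Y)
  rw [List.sum_append] at h
  linarith

lemma take_refl2_sum (w : List MStep) (j : ℕ) :
    (((refl2 w).take j).map MStep.val).sum =
      ((w.take (w.length - j)).map MStep.val).sum - (w.map MStep.val).sum := by
  have h1 : (refl2 w).take j = ((w.map MStep.swap).drop (w.length - j)).reverse := by
    rw [refl2, List.take_reverse, List.length_map]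
  rw [h1, List.map_reverse, List.sum_reverse, List.map_drop, sum_drop, sum_val_map_swap]
  have h2 : ((List.map MStep.val (List.map MStep.swap w)).take (w.length - j)).sum
      = -(((w.take (w.length - j)).map MStep.val).sum) := by
    rw [← List.map_take, ← List.map_take, sum_val_map_swap]
  rw [h2, List.map_take]
  ring

lemma motzkin_build (w : List MStep) (hw : hOkN 0 w = true) :
    IsMotzkinPath (w ++ refl2 w) := by
  have h0 := (hOkN_iff w 0).mp hw
  have hA : ∀ m, 0 ≤ ((w.take m).map MStep.val).sum := by
    intro m
    have := h0 m
    simpa using this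
  constructor
  · intro k
    rw [List.take_append, List.map_append, List.sum_append, take_refl2_sum]
    by_cases hk : k ≤ w.length
    · rw [show k - w.length = 0 from by omega, Nat.sub_zero, List.take_length]
      have := hA k
      linarith
    · rw [List.take_of_length_le (by omega : w.length ≤ k)]
      have := hA (w.length - (k - w.length))
      linarith
  · rw [List.map_append, List.sum_append, sum_val_refl2]
    ring

lemma sym_build (w : List MStep) : IsSymmetricPath (w ++ refl2 w) := by
  show ((w ++ refl2 w).reverse).map MStep.swap = w ++ refl2 w
  rw [refl2, List.reverse_append, List.reverse_reverse, List.map_append,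
    List.map_map, List.map_reverse]
  have : MStep.swap ∘ MStep.swap = id := funext swap_swap
  rw [this, List.map_id]

lemma count_build (w : List MStep) :
    (w ++ refl2 w).count MStep.up = w.count .up + w.count .down := by
  rw [List.count_append, count_up_refl2]

lemma drop_eq_refl2_take (l : List MStep) (n : ℕ) (hlen : l.length = 2*n)
    (hsym : IsSymmetricPath l) : l.drop n = refl2 (l.take n) := by
  have h1 : l.reverse.map MStep.swap = l := hsym
  conv_lhs => rw [← h1]
  rw [← List.map_drop, List.drop_reverse, hlen, show 2*n - n = n from by omega,
    refl2, List.map_reverse]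

lemma take_hOkN (l : List MStep) (n : ℕ) (hm : IsMotzkinPath l) :
    hOkN 0 (l.take n) = true := by
  rw [hOkN_iff]
  intro k
  rw [List.take_take]
  have := hm.1 (min k n)
  simpa using this

end SymAux

/-- For nonnegative integers `n` and `i`, the number of symmetric Motzkin paths of
length `2n` with exactly `i` up steps is `C(n, i) * C(i, ⌊i/2⌋)`. -/
theorem count_symMotzkin_with_up_steps (n i : ℕ) :
    Nat.card {l : List MStep // l.length = 2 * n ∧ IsMotzkinPath l ∧
        IsSymmetricPath l ∧ l.count MStep.up = i} =
      n.choose i * i.choose (i / 2) := by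
  classical
  open SymAux in
  have e : {l : List MStep // l.length = 2 * n ∧ IsMotzkinPath l ∧
        IsSymmetricPath l ∧ l.count MStep.up = i} ≃
      {w : List MStep //
        w ∈ (M n 0).filter (fun w => w.count MStep.up + w.count MStep.down = i)} := by
    refine ⟨fun l => ⟨l.1.take n, ?_⟩, fun w => ⟨w.1 ++ refl2 w.1, ?_⟩, ?_, ?_⟩
    · obtain ⟨l, hlen, hmz, hsym, hcnt⟩ := l
      have hdec : l = l.take n ++ refl2 (l.take n) := by
        rw [← drop_eq_refl2_take l n hlen hsym, List.take_append_drop]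
      rw [Finset.mem_filter, mem_M]
      refine ⟨⟨?_, take_hOkN l n hmz⟩, ?_⟩
      · rw [List.length_take, hlen]; omega
      · rw [hdec, count_build] at hcnt
        exact hcnt
    · obtain ⟨w, hw⟩ := w
      rw [Finset.mem_filter, mem_M] at hw
      obtain ⟨⟨hlen, hok⟩, hcnt⟩ := hw
      refine ⟨?_, motzkin_build w hok, sym_build w, ?_⟩
      · rw [List.length_append, length_refl2, hlen]; omega
      · rw [count_build]; exact hcnt
    · rintro ⟨l, hlen, hmz, hsym, hcnt⟩
      apply Subtype.ext
      show l.take n ++ refl2 (l.take n) = l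
      rw [← drop_eq_refl2_take l n hlen hsym, List.take_append_drop]
    · rintro ⟨w, hw⟩
      rw [Finset.mem_filter, mem_M] at hw
      apply Subtype.ext
      show (w ++ refl2 w).take n = w
      exact List.take_left' hw.1.1
  rw [Nat.card_congr e, Nat.card_eq_finsetCard]
  have : ((M n 0).filter (fun w => w.count MStep.up + w.count MStep.down = i)).card
      = cM n 0 i := rfl
  rw [this, cM_eq, aN_zero_eq]
end

section
/- For every positive integer n, the numbers S_{2n} of symmetric Motzkin paths of length 2n and M_n of Motzkin paths of length n satisfy the recurrence S_{2n} = M_n + Σ_{k=0}^{n−1} S_{2n−2k−2} * M_k. -/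
namespace MotzkinAux

instance : Fintype MStep :=
  ⟨⟨{.up, .flat, .down}, by decide⟩, fun x => by cases x <;> decide⟩

/-- total sum -/
def tsum (p : List MStep) : ℤ := (p.map MStep.val).sum

/-- height after `j` steps -/
def hsum (p : List MStep) (j : ℕ) : ℤ := ((p.take j).map MStep.val).sum

def MPrefix (p : List MStep) : Prop := ∀ k, 0 ≤ hsum p k

lemma hsum_length (p : List MStep) : hsum p p.length = tsum p := by
  simp [hsum, tsum]

lemma hsum_of_length_le {p : List MStep} {j : ℕ} (h : p.length ≤ j) : hsum p j = tsum p := by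
  simp [hsum, tsum, List.take_of_length_le h]

lemma mprefix_of_bounded {p : List MStep} (h : ∀ j ≤ p.length, 0 ≤ hsum p j) : MPrefix p := by
  intro k
  rcases le_or_gt k p.length with hk | hk
  · exact h k hk
  · rw [hsum_of_length_le hk.le, ← hsum_length]; exact h _ le_rfl

lemma hsum_append_left {m l : List MStep} {j : ℕ} (h : j ≤ m.length) :
    hsum (m ++ l) j = hsum m j := by
  simp [hsum, List.take_append_of_le_length h]

lemma hsum_append_add (m l : List MStep) (j : ℕ) :
    hsum (m ++ l) (m.length + j) = tsum m + hsum l j := by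
  simp [hsum, tsum, List.take_append]
  rw [List.take_of_length_le (by simp)]

lemma tsum_append (m l : List MStep) : tsum (m ++ l) = tsum m + tsum l := by
  simp [tsum]

lemma hsum_succ {p : List MStep} {j : ℕ} (h : j < p.length) :
    hsum p (j + 1) = hsum p j + (p[j]).val := by
  have := List.sum_take_succ (p.map MStep.val) j (by simpa using h)
  simpa [hsum] using this

lemma mprefix_iff (p : List MStep) : IsMotzkinPath p ↔ MPrefix p ∧ tsum p = 0 := Iff.rfl

@[simp] lemma val_swap (s : MStep) : (MStep.swap s).val = - s.val := by cases s <;> rfl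

lemma tsum_map_swap (p : List MStep) : tsum (p.map MStep.swap) = - tsum p := by
  induction p with
  | nil => simp [tsum]
  | cons a l ih => simp [tsum, List.map_cons] at ih ⊢; omega

lemma tsum_reverse (p : List MStep) : tsum p.reverse = tsum p := by
  simp [tsum, List.sum_reverse]

@[simp] lemma swap_swap (s : MStep) : s.swap.swap = s := by cases s <;> rfl


lemma hsum_eq_tsum_take (p : List MStep) (j : ℕ) : hsum p j = tsum (p.take j) := rfl

lemma tsum_take_add_drop (p : List MStep) (j : ℕ) : hsum p j + tsum (p.drop j) = tsum p := by
  rw [hsum_eq_tsum_take, ← tsum_append, List.take_append_drop]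

/-- symmetrization of a prefix -/
def symm (p : List MStep) : List MStep := p ++ (p.map MStep.swap).reverse

lemma length_symm (p : List MStep) : (symm p).length = 2 * p.length := by
  simp [symm]; ring

lemma isSymmetric_symm (p : List MStep) : IsSymmetricPath (symm p) := by
  unfold IsSymmetricPath symm
  simp [List.reverse_append, List.map_map, Function.comp_def]

lemma tsum_symm (p : List MStep) : tsum (symm p) = 0 := by
  rw [symm, tsum_append, tsum_reverse, tsum_map_swap]; ring

lemma hsum_symm_right (p : List MStep) {i : ℕ} :
    hsum (symm p) (p.length + i) = hsum p (p.length - i) := by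
  rw [symm, hsum_append_add]
  have h1 : ((p.map MStep.swap).reverse).take i
      = ((p.map MStep.swap).drop (p.length - i)).reverse := by
    rw [List.take_reverse, List.length_map]
  rw [hsum_eq_tsum_take, h1, tsum_reverse, ← List.map_drop, tsum_map_swap]
  have h2 := tsum_take_add_drop p (p.length - i)
  omega

lemma isMotzkin_symm {p : List MStep} (hp : MPrefix p) : IsMotzkinPath (symm p) := by
  constructor
  · intro k
    show 0 ≤ hsum (symm p) k
    rcases le_or_gt k p.length with hk | hk
    · rw [symm, hsum_append_left hk]; exact hp k
    · rcases le_or_gt k (2 * p.length) with hk2 | hk2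
      · have : k = p.length + (k - p.length) := by omega
        rw [this, hsum_symm_right p]
        exact hp _
      · rw [hsum_of_length_le (by rw [length_symm]; omega), tsum_symm]
  · exact tsum_symm p

lemma symm_take {l : List MStep} {m : ℕ} (hl : l.length = 2 * m) (hs : IsSymmetricPath l) :
    symm (l.take m) = l := by
  have hswap : (l.map MStep.swap).reverse = l := by
    rw [← List.map_reverse]; exact hs
  have hdrop : l.drop m = ((l.take m).map MStep.swap).reverse := by
    conv_lhs => rw [← hswap]
    rw [List.drop_reverse, List.length_map, hl, List.map_take]
    congr 2
    omega
  rw [symm, ← hdrop, List.take_append_drop]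

lemma symm_card (m : ℕ) :
    symMotzkin (2 * m) = Nat.card {p : List MStep // p.length = m ∧ MPrefix p} := by
  rw [symMotzkin]
  apply Nat.card_congr
  apply Equiv.ofBijective
    (f := fun l => ⟨(l : List MStep).take m, by
      obtain ⟨l, hlen, hmot, hsym⟩ := l
      refine ⟨by simp [hlen]; omega, ?_⟩
      apply mprefix_of_bounded
      intro j hj
      have hjm : j ≤ m := by simp [hlen] at hj; omega
      have : hsum (l.take m) j = hsum l j := by
        rw [hsum_eq_tsum_take, hsum_eq_tsum_take, List.take_take, min_eq_left hjm]
      rw [this]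
      exact hmot.1 j⟩)
  constructor
  · rintro ⟨l₁, hl₁⟩ ⟨l₂, hl₂⟩ h
    have h' : l₁.take m = l₂.take m := congrArg Subtype.val h
    apply Subtype.ext
    show l₁ = l₂
    rw [← symm_take hl₁.1 hl₁.2.2, ← symm_take hl₂.1 hl₂.2.2, h']
  · rintro ⟨p, hlen, hp⟩
    refine ⟨⟨symm p, by rw [length_symm, hlen], isMotzkin_symm hp, isSymmetric_symm p⟩, ?_⟩
    apply Subtype.ext
    show (symm p).take m = p
    rw [symm, ← hlen, List.take_append_of_le_length le_rfl, List.take_length]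

/-! ### Decomposition of nonempty positive-ending prefixes -/

lemma hsum_zero (p : List MStep) : hsum p 0 = 0 := by simp [hsum]

/-- the last time the path is at height 0 -/
def kOf (p : List MStep) : ℕ := Nat.findGreatest (fun j => hsum p j = 0) p.length

lemma kOf_spec (p : List MStep) : hsum p (kOf p) = 0 :=
  Nat.findGreatest_spec (P := fun j => hsum p j = 0) (Nat.zero_le _) (hsum_zero p)

lemma kOf_le (p : List MStep) : kOf p ≤ p.length := Nat.findGreatest_le _

lemma kOf_is_greatest {p : List MStep} {j : ℕ} (h1 : kOf p < j) (h2 : j ≤ p.length) :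
    hsum p j ≠ 0 := Nat.findGreatest_is_greatest h1 h2

lemma kOf_lt {p : List MStep} (hne : tsum p ≠ 0) : kOf p < p.length := by
  rcases lt_or_eq_of_le (kOf_le p) with h | h
  · exact h
  · exfalso; apply hne; rw [← hsum_length, ← h, kOf_spec]

lemma hsum_pos_after {p : List MStep} (hp : MPrefix p) {j : ℕ}
    (h1 : kOf p < j) (h2 : j ≤ p.length) : 1 ≤ hsum p j := by
  have := kOf_is_greatest h1 h2
  have := hp j
  omega

lemma getElem_kOf {p : List MStep} (hp : MPrefix p) (hne : tsum p ≠ 0) :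
    p[kOf p]'(kOf_lt hne) = MStep.up := by
  have hlt := kOf_lt hne
  have h1 := hsum_succ hlt
  rw [kOf_spec] at h1
  have h2 : 1 ≤ hsum p (kOf p + 1) := hsum_pos_after hp (Nat.lt_succ_self _) hlt
  cases h : p[kOf p]'hlt <;> rw [h] at h1 <;> simp [MStep.val] at h1 <;> omega

lemma hsum_take (p : List MStep) (k j : ℕ) : hsum (p.take k) j = hsum p (min j k) := by
  rw [hsum_eq_tsum_take, hsum_eq_tsum_take, List.take_take]

lemma hsum_drop {p : List MStep} {k : ℕ} (hk : k ≤ p.length) (j : ℕ) :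
    hsum p (k + j) = hsum p k + hsum (p.drop k) j := by
  conv_lhs => rw [← List.take_append_drop k p]
  rw [show k + j = (p.take k).length + j by rw [List.length_take]; omega, hsum_append_add,
    hsum_eq_tsum_take]
  rfl

lemma take_kOf_motzkin {p : List MStep} (hp : MPrefix p) :
    IsMotzkinPath (p.take (kOf p)) := by
  constructor
  · intro j
    show 0 ≤ hsum _ j
    rw [hsum_take]
    exact hp _
  · show tsum _ = 0
    rw [← hsum_eq_tsum_take, kOf_spec]

lemma drop_kOf_mprefix {p : List MStep} (hp : MPrefix p) (hne : tsum p ≠ 0) :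
    MPrefix (p.drop (kOf p + 1)) := by
  have hlt := kOf_lt hne
  apply mprefix_of_bounded
  intro j hj
  rw [List.length_drop] at hj
  have h1 := hsum_drop (p := p) (k := kOf p + 1) (by omega) j
  have h2 : 1 ≤ hsum p (kOf p + 1 + j) := hsum_pos_after hp (by omega) (by omega)
  have h3 : 1 ≤ hsum p (kOf p + 1) := hsum_pos_after hp (by omega) (by omega)
  have h4 : hsum p (kOf p + 1) = 1 := by
    have := hsum_succ hlt
    rw [kOf_spec, getElem_kOf hp hne] at this
    simpa [MStep.val] using this
  omega

lemma tsum_of_motzkin {m : List MStep} (hm : IsMotzkinPath m) : tsum m = 0 := hm.2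

lemma hsum_cons_up (q : List MStep) (j : ℕ) :
    hsum (MStep.up :: q) (j + 1) = 1 + hsum q j := by
  simp [hsum, MStep.val]

/-- properties of the reassembled path -/
lemma construct_facts {m q : List MStep} (hm : IsMotzkinPath m) (hq : MPrefix q) :
    MPrefix (m ++ MStep.up :: q) ∧ tsum (m ++ MStep.up :: q) = 1 + tsum q ∧
      kOf (m ++ MStep.up :: q) = m.length := by
  set p := m ++ MStep.up :: q with hpdef
  have hlen : p.length = m.length + 1 + q.length := by simp [hpdef]; omega
  have hafter : ∀ j, hsum p (m.length + (j + 1)) = 1 + hsum q j := by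
    intro j
    rw [hpdef, hsum_append_add, hsum_cons_up, tsum_of_motzkin hm]; ring
  have hpre : MPrefix p := by
    intro j
    rcases le_or_gt j m.length with hj | hj
    · rw [hpdef, hsum_append_left hj]
      exact hm.1 j
    · obtain ⟨i, rfl⟩ : ∃ i, j = m.length + (i + 1) := ⟨j - m.length - 1, by omega⟩
      rw [hafter]
      have := hq i
      omega
  have htsum : tsum p = 1 + tsum q := by
    rw [hpdef, tsum_append, tsum_of_motzkin hm]
    show 0 + (MStep.up.val + tsum q) = _
    simp [MStep.val]
  refine ⟨hpre, htsum, ?_⟩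
  rw [kOf]
  rw [Nat.findGreatest_eq_iff]
  refine ⟨by omega, fun _ => ?_, fun j h1 h2 => ?_⟩
  · rw [hpdef, hsum_append_left le_rfl, hsum_length, tsum_of_motzkin hm]
  · obtain ⟨i, rfl⟩ : ∃ i, j = m.length + (i + 1) := ⟨j - m.length - 1, by omega⟩
    rw [hafter]
    have := hq i
    omega

lemma tsum_nonneg {q : List MStep} (hq : MPrefix q) : 0 ≤ tsum q := by
  rw [← hsum_length]; exact hq _

lemma finite_sub (n : ℕ) (P : List MStep → Prop) :
    Finite {l : List MStep // l.length = n ∧ P l} := by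
  have h : Finite {l : List MStep // l.length = n} :=
    (List.finite_length_eq MStep n).to_subtype
  exact Finite.of_injective
    (fun x => (⟨x.1, x.2.1⟩ : {l : List MStep // l.length = n}))
    (fun a b hab => by
      apply Subtype.ext
      simpa [Subtype.mk.injEq] using hab)

/-- the inverse of the decomposition -/
def glue (n : ℕ)
    (x : Σ k : Fin n, {m : List MStep // m.length = k ∧ IsMotzkinPath m} ×
      {q : List MStep // q.length = n - k - 1 ∧ MPrefix q}) :
    {p : List MStep // p.length = n ∧ MPrefix p ∧ tsum p ≠ 0} := by
  obtain ⟨⟨k, hk⟩, ⟨m, hm⟩, ⟨q, hq⟩⟩ := x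
  refine ⟨m ++ MStep.up :: q, ?_, (construct_facts hm.2 hq.2).1, ?_⟩
  · simp [hm.1, hq.1]; omega
  · have h1 := (construct_facts hm.2 hq.2).2.1
    have h2 := tsum_nonneg hq.2
    omega

lemma glue_bijective (n : ℕ) : Function.Bijective (glue n) := by
  constructor
  · rintro ⟨k₁, ⟨m₁, hm₁⟩, ⟨q₁, hq₁⟩⟩ ⟨k₂, ⟨m₂, hm₂⟩, ⟨q₂, hq₂⟩⟩ h
    have e : m₁ ++ MStep.up :: q₁ = m₂ ++ MStep.up :: q₂ := congrArg Subtype.val h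
    have h1 := (construct_facts hm₁.2 hq₁.2).2.2
    have h2 := (construct_facts hm₂.2 hq₂.2).2.2
    rw [e] at h1
    have hml : m₁.length = m₂.length := by rw [h1] at h2; omega
    have hk : k₁ = k₂ := by
      apply Fin.ext
      rw [← hm₁.1, ← hm₂.1, hml]
    subst hk
    obtain ⟨he1, he2⟩ := List.append_inj e hml
    have he3 : q₁ = q₂ := by simpa using he2
    subst he1; subst he3
    rfl
  · rintro ⟨p, hlen, hp, hne⟩
    have hlt : kOf p < p.length := kOf_lt hne
    refine ⟨⟨⟨kOf p, by omega⟩, ⟨p.take (kOf p), ?_, take_kOf_motzkin hp⟩,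
      ⟨p.drop (kOf p + 1), ?_, drop_kOf_mprefix hp hne⟩⟩, ?_⟩
    · simp; omega
    · simp; omega
    · apply Subtype.ext
      show p.take (kOf p) ++ MStep.up :: p.drop (kOf p + 1) = p
      conv_rhs => rw [← List.take_append_drop (kOf p) p]
      congr 1
      rw [List.drop_eq_getElem_cons hlt, getElem_kOf hp hne]

lemma mpref_rec (n : ℕ) (hn : 0 < n) :
    Nat.card {p : List MStep // p.length = n ∧ MPrefix p} =
      motzkin n + ∑ k ∈ Finset.range n,
        Nat.card {q : List MStep // q.length = n - k - 1 ∧ MPrefix q} * motzkin k := by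
  haveI : Finite {p : List MStep // p.length = n ∧ MPrefix p} := finite_sub n _
  haveI : ∀ k, Finite {m : List MStep // m.length = k ∧ IsMotzkinPath m} :=
    fun k => finite_sub k _
  haveI : ∀ k, Finite {q : List MStep // q.length = n - k - 1 ∧ MPrefix q} :=
    fun k => finite_sub _ _
  haveI : Finite {p : List MStep // (p.length = n ∧ MPrefix p) ∧ tsum p = 0} := by
    haveI := finite_sub n (fun l => MPrefix l ∧ tsum l = 0)
    exact Finite.of_equiv {l : List MStep // l.length = n ∧ (MPrefix l ∧ tsum l = 0)}
      (Equiv.subtypeEquivRight (fun p => and_assoc.symm))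
  haveI : Finite {p : List MStep // (p.length = n ∧ MPrefix p) ∧ ¬(tsum p = 0)} := by
    haveI := finite_sub n (fun l => MPrefix l ∧ ¬(tsum l = 0))
    exact Finite.of_equiv {l : List MStep // l.length = n ∧ (MPrefix l ∧ ¬(tsum l = 0))}
      (Equiv.subtypeEquivRight (fun p => and_assoc.symm))
  -- split according to whether the final height is zero
  have hsplit : Nat.card {p : List MStep // p.length = n ∧ MPrefix p} =
      Nat.card {p : List MStep // (p.length = n ∧ MPrefix p) ∧ tsum p = 0} +
      Nat.card {p : List MStep // (p.length = n ∧ MPrefix p) ∧ ¬(tsum p = 0)} := by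
    rw [← Nat.card_sum]
    apply Nat.card_congr
    calc {p : List MStep // p.length = n ∧ MPrefix p}
        ≃ {x : {p : List MStep // p.length = n ∧ MPrefix p} // tsum x.1 = 0} ⊕
          {x : {p : List MStep // p.length = n ∧ MPrefix p} // ¬(tsum x.1 = 0)} :=
          (Equiv.sumCompl _).symm
      _ ≃ _ := Equiv.sumCongr
          (Equiv.subtypeSubtypeEquivSubtypeInter
            (fun p : List MStep => p.length = n ∧ MPrefix p) (fun p => tsum p = 0))
          (Equiv.subtypeSubtypeEquivSubtypeInter
            (fun p : List MStep => p.length = n ∧ MPrefix p) (fun p => ¬(tsum p = 0)))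
  have hzero : Nat.card {p : List MStep // (p.length = n ∧ MPrefix p) ∧ tsum p = 0} =
      motzkin n := by
    rw [motzkin]
    apply Nat.card_congr
    apply Equiv.subtypeEquivRight
    intro p
    constructor
    · rintro ⟨⟨h1, h2⟩, h3⟩; exact ⟨h1, h2, h3⟩
    · rintro ⟨h1, h2, h3⟩; exact ⟨⟨h1, h2⟩, h3⟩
  have hpos : Nat.card {p : List MStep // (p.length = n ∧ MPrefix p) ∧ ¬(tsum p = 0)} =
      ∑ k ∈ Finset.range n,
        Nat.card {q : List MStep // q.length = n - k - 1 ∧ MPrefix q} * motzkin k := by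
    have e1 : {p : List MStep // (p.length = n ∧ MPrefix p) ∧ ¬(tsum p = 0)} ≃
        {p : List MStep // p.length = n ∧ MPrefix p ∧ tsum p ≠ 0} :=
      Equiv.subtypeEquivRight (fun p => by tauto)
    have e2 := (Equiv.ofBijective _ (glue_bijective n)).symm
    rw [Nat.card_congr (e1.trans e2)]
    haveI : ∀ k : Fin n, Fintype ({m : List MStep // m.length = k ∧ IsMotzkinPath m} ×
        {q : List MStep // q.length = n - k - 1 ∧ MPrefix q}) := fun k => Fintype.ofFinite _
    rw [Nat.card_eq_fintype_card, Fintype.card_sigma]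
    rw [← Fin.sum_univ_eq_sum_range (fun k =>
      Nat.card {q : List MStep // q.length = n - k - 1 ∧ MPrefix q} * motzkin k)]
    apply Finset.sum_congr rfl
    intro k _
    rw [← Nat.card_eq_fintype_card, Nat.card_prod]
    rw [show Nat.card {m : List MStep // m.length = (k : ℕ) ∧ IsMotzkinPath m} = motzkin k
      from rfl]
    ring
  rw [hsplit, hzero, hpos]

end MotzkinAux

open MotzkinAux in
/-- For every positive integer `n`, the numbers of symmetric Motzkin paths and of
Motzkin paths satisfy `S_{2n} = M_n + Σ_{k=0}^{n-1} S_{2n-2k-2} * M_k`. -/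
theorem symMotzkin_recurrence (n : ℕ) (hn : 0 < n) :
    symMotzkin (2 * n) =
      motzkin n + ∑ k ∈ Finset.range n, symMotzkin (2 * n - 2 * k - 2) * motzkin k := by
  rw [symm_card n, mpref_rec n hn]
  congr 1
  apply Finset.sum_congr rfl
  intro k hk
  rw [Finset.mem_range] at hk
  rw [show 2 * n - 2 * k - 2 = 2 * (n - k - 1) by omega, symm_card]
end

section
/- For every positive integer s, the number of self-conjugate (2s,2s+1,2s+2)-core partitions λ such that none of the odd numbers 1, 3, …, 2s−1 belongs to MD(λ) equals M_s, the number of Motzkin paths of length s. -/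
/-- A partition, given as a weakly decreasing sequence of natural numbers with
finite support.  `parts i` is the size of the `(i+1)`-st row (0-indexed). -/
structure YPartition where
  parts : ℕ → ℕ
  antitone : ∀ ⦃i j : ℕ⦄, i ≤ j → parts j ≤ parts i
  support_finite : ∃ N, ∀ i, N ≤ i → parts i = 0

namespace YPartition

/-- The conjugate partition: `conj p j` is the number of rows having more than `j`
boxes, i.e. the length of the `(j+1)`-st column (0-indexed). -/
noncomputable def conj (p : YPartition) (j : ℕ) : ℕ :=
  Set.ncard {i : ℕ | j < p.parts i}

/-- `p.IsSelfConjugate` means the conjugate of `p` equals `p`. -/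
def IsSelfConjugate (p : YPartition) : Prop :=
  ∀ j, p.conj j = p.parts j

/-- The hook length of the (0-indexed) box `(i, j)`; in 1-indexed terms this is
`λ_{i+1} + λ'_{j+1} - (i+1) - (j+1) + 1`. -/
noncomputable def hook (p : YPartition) (i j : ℕ) : ℕ :=
  p.parts i + p.conj j - i - j - 1

/-- `p.IsCore t` means no hook length of a box of `p` is divisible by `t`. -/
def IsCore (p : YPartition) (t : ℕ) : Prop :=
  ∀ i j, j < p.parts i → ¬ (t ∣ p.hook i j)

/-- The set of main diagonal hook lengths of `p`. -/
noncomputable def MD (p : YPartition) : Set ℕ :=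
  {h | ∃ i, i < p.parts i ∧ h = p.hook i i}

end YPartition

/-- Number of Motzkin-type paths of length `L` starting at height `h`, ending at 0. -/
def Gcnt : ℕ → ℕ → ℕ
  | 0, h => if h = 0 then 1 else 0
  | (L+1), h => Gcnt L (h+1) + Gcnt L h + (if h = 0 then 0 else Gcnt L (h-1))

/-- Number of cap-sequences of length `L` with previous two values `a`, `b`. -/
def Fcnt : ℕ → ℕ → ℕ → ℕ
  | 0, _, _ => 1
  | (L+1), a, b => ∑ v ∈ Finset.range (min a b + 2), Fcnt L b v

lemma Gcnt_succ (L h : ℕ) :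
    Gcnt (L+1) h = Gcnt L (h+1) + Gcnt L h + (if h = 0 then 0 else Gcnt L (h-1)) := rfl

lemma Fcnt_succ (L a b : ℕ) :
    Fcnt (L+1) a b = ∑ v ∈ Finset.range (min a b + 2), Fcnt L b v := rfl

lemma Gcnt_zero_of_gt : ∀ L h, L < h → Gcnt L h = 0 := by
  intro L
  induction L with
  | zero => intro h hh; simp only [Gcnt]; rw [if_neg (by omega)]
  | succ L ih =>
    intro h hh
    rw [Gcnt_succ, if_neg (by omega), ih (h+1) (by omega), ih h (by omega),
      ih (h-1) (by omega)]

lemma Gcnt_diag : ∀ L, Gcnt L L = 1 := by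
  intro L
  induction L with
  | zero => simp [Gcnt]
  | succ L ih =>
    rw [Gcnt_succ, Gcnt_zero_of_gt L (L+1+1) (by omega), Gcnt_zero_of_gt L (L+1) (by omega),
      if_neg (by omega), show L+1-1 = L from rfl, ih]

lemma Gcnt_subdiag : ∀ L, Gcnt (L+1) L = L + 1 := by
  intro L
  induction L with
  | zero => simp [Gcnt]
  | succ L ih =>
    rw [Gcnt_succ, Gcnt_zero_of_gt (L+1) (L+1+1) (by omega), if_neg (by omega),
      show L+1-1 = L from rfl, Gcnt_diag (L+1), ih]
    omega

/-- The main numeric identity, all three parts at once. -/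
lemma FG_main : ∀ L a b, (a < b → Fcnt L a b = Gcnt (L+a+1) (a+1)) ∧
    (b ≤ a → 0 < b → Fcnt L a b + Gcnt (L+b) (b-1) = Gcnt (L+b+1) b) ∧
    (Fcnt L a 0 = Gcnt (L+1) 0) := by
  intro L
  induction L with
  | zero =>
    intro a b
    refine ⟨fun _ => ?_, fun _ hb => ?_, ?_⟩
    · show (1:ℕ) = Gcnt (0+a+1) (a+1)
      rw [show 0+a+1 = a+1 by omega, Gcnt_diag]
    · show 1 + Gcnt (0+b) (b-1) = Gcnt (0+b+1) b
      have e1 : Gcnt (0+b) (b-1) = b := by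
        rw [show 0+b = (b-1)+1 by omega, Gcnt_subdiag]; omega
      have e2 : Gcnt (0+b+1) b = b + 1 := by
        rw [show 0+b+1 = b+1 by omega, show Gcnt (b+1) b = b + 1 from Gcnt_subdiag b]
      omega
    · show (1:ℕ) = Gcnt 1 0
      simp [Gcnt]
  | succ L ih =>
    -- telescoping sum lemma
    have T : ∀ b c, c ≤ b → ∑ v ∈ Finset.range (c+1), Fcnt L b v = Gcnt (L+c+1) c := by
      intro b c
      induction c with
      | zero => intro _; simpa using (ih b 0).2.2
      | succ c ihc =>
        intro hc
        rw [Finset.sum_range_succ, ihc (by omega)]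
        have h2 := (ih b (c+1)).2.1 hc (by omega)
        rw [show c+1-1 = c from rfl, show L+(c+1) = L+c+1 by omega] at h2
        rw [show L+(c+1)+1 = L+c+1+1 by omega]
        omega
    intro a b
    refine ⟨fun hab => ?_, fun hba hb => ?_, ?_⟩
    · rw [Fcnt_succ, min_eq_left (by omega), show a + 2 = (a+1)+1 by omega,
        T b (a+1) (by omega), show L+(a+1)+1 = L+1+a+1 by omega]
    · have e1 : Fcnt (L+1) a b = (∑ v ∈ Finset.range (b+1), Fcnt L b v) + Fcnt L b (b+1) := by
        rw [Fcnt_succ, min_eq_right hba, show b+2 = (b+1)+1 by omega, Finset.sum_range_succ]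
      have e2 := T b b le_rfl
      have e3 : Fcnt L b (b+1) = Gcnt (L+b+1) (b+1) := (ih b (b+1)).1 (by omega)
      have e4 : Gcnt (L+1+b+1) b = Gcnt (L+b+1) (b+1) + Gcnt (L+b+1) b + Gcnt (L+b+1) (b-1) := by
        rw [show L+1+b+1 = (L+b+1)+1 by omega, Gcnt_succ, if_neg (by omega)]
      have e5 : Gcnt (L+1+b) (b-1) = Gcnt (L+b+1) (b-1) := by
        rw [show L+1+b = L+b+1 by omega]
      omega
    · have e1 : Fcnt (L+1) a 0 = Fcnt L 0 0 + Fcnt L 0 1 := by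
        rw [Fcnt_succ, min_eq_right (Nat.zero_le a), show (0:ℕ)+2 = 1+1 by omega,
          Finset.sum_range_succ, Finset.sum_range_one]
      have e2 : Fcnt L 0 0 = Gcnt (L+1) 0 := (ih 0 0).2.2
      have e3 : Fcnt L 0 1 = Gcnt (L+1) 1 := by
        have := (ih 0 1).1 (by omega)
        rwa [show L+0+1 = L+1 by omega, show (0:ℕ)+1 = 1 by omega] at this
      have e4 : Gcnt (L+1+1) 0 = Gcnt (L+1) 1 + Gcnt (L+1) 0 := by
        rw [show Gcnt (L+1+1) 0 = Gcnt (L+1) (0+1) + Gcnt (L+1) 0 +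
          (if (0:ℕ) = 0 then 0 else Gcnt (L+1) (0-1)) from Gcnt_succ (L+1) 0,
          if_pos rfl, show (0:ℕ)+1 = 1 by omega]
        omega
      omega

lemma FG_final (s : ℕ) (hs : 0 < s) : Fcnt (s-1) 0 0 = Gcnt s 0 := by
  have := (FG_main (s-1) 0 0).2.2
  rwa [show s - 1 + 1 = s by omega] at this

/-! ### Counting Motzkin paths via a recursion -/

def MPZ (z : ℤ) (l : List MStep) : Prop :=
  (∀ k, 0 ≤ z + ((l.take k).map MStep.val).sum) ∧ z + (l.map MStep.val).sum = 0

noncomputable def MFin : ℕ → ℕ → Finset (List MStep)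
  | 0, h => if h = 0 then {[]} else ∅
  | (L+1), h => ((MFin L (h+1)).image (MStep.up :: ·)) ∪
      ((MFin L h).image (MStep.flat :: ·)) ∪
      (if h = 0 then ∅ else (MFin L (h-1)).image (MStep.down :: ·))

lemma MPZ_nil (z : ℤ) : MPZ z [] ↔ z = 0 := by
  constructor
  · intro ⟨_, h2⟩; simpa using h2
  · intro h; subst h; exact ⟨fun k => by simp, by simp⟩

lemma MPZ_cons (z : ℤ) (hz : 0 ≤ z) (σ : MStep) (t : List MStep) :
    MPZ z (σ :: t) ↔ 0 ≤ z + σ.val ∧ MPZ (z + σ.val) t := by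
  constructor
  · intro ⟨h1, h2⟩
    have hc : ∀ k, (((σ :: t).take (k+1)).map MStep.val).sum
        = σ.val + ((t.take k).map MStep.val).sum := by
      intro k; simp [List.take_succ_cons]
    have h1' := h1 1
    rw [hc 0] at h1'
    simp at h1'
    refine ⟨by linarith, fun k => ?_, ?_⟩
    · have := h1 (k+1); rw [hc k] at this; linarith
    · simp only [List.map_cons, List.sum_cons] at h2; linarith
  · intro ⟨h0, hm, hs⟩
    refine ⟨fun k => ?_, ?_⟩
    · cases k with
      | zero => simpa using hz
      | succ k =>
        have := hm k
        simp only [List.take_succ_cons, List.map_cons, List.sum_cons]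
        linarith
    · simp only [List.map_cons, List.sum_cons]; linarith

lemma MFin_card : ∀ L h, (MFin L h).card = Gcnt L h := by
  intro L
  induction L with
  | zero =>
    intro h
    by_cases hh : h = 0 <;> simp [MFin, Gcnt, hh]
  | succ L ih =>
    intro h
    have hinj : ∀ σ : MStep, Function.Injective (σ :: · : List MStep → List MStep) := by
      intro σ a b hab; simpa using hab
    have hdisj : ∀ (σ τ : MStep) (A B : Finset (List MStep)), σ ≠ τ →
        Disjoint (A.image (σ :: ·)) (B.image (τ :: ·)) := by
      intro σ τ A B hne
      rw [Finset.disjoint_left]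
      rintro l hl hl'
      obtain ⟨a, _, rfl⟩ := Finset.mem_image.1 hl
      obtain ⟨b, _, hb⟩ := Finset.mem_image.1 hl'
      injection hb with h1 h2
      exact hne h1.symm
    show ((MFin L (h+1)).image (MStep.up :: ·) ∪ (MFin L h).image (MStep.flat :: ·) ∪
      (if h = 0 then ∅ else (MFin L (h-1)).image (MStep.down :: ·))).card = _
    rw [Finset.card_union_of_disjoint, Finset.card_union_of_disjoint,
      Finset.card_image_of_injective _ (hinj _), Finset.card_image_of_injective _ (hinj _)]
    · rw [Gcnt_succ, ih, ih]
      congr 1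
      by_cases hh : h = 0
      · simp [hh]
      · rw [if_neg hh, if_neg hh, Finset.card_image_of_injective _ (hinj _), ih]
    · exact hdisj _ _ _ _ (by simp)
    · by_cases hh : h = 0
      · simp [hh]
      · rw [if_neg hh, Finset.disjoint_union_left]
        exact ⟨hdisj _ _ _ _ (by simp), hdisj _ _ _ _ (by simp)⟩

lemma MFin_mem : ∀ L h (l : List MStep), l ∈ MFin L h ↔ (l.length = L ∧ MPZ (h : ℤ) l) := by
  intro L
  induction L with
  | zero =>
    intro h l
    constructor
    · intro hl
      by_cases hh : h = 0
      · subst hh; simp only [MFin, if_pos] at hl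
        rw [Finset.mem_singleton] at hl
        subst hl; exact ⟨rfl, (MPZ_nil 0).2 rfl⟩
      · simp [MFin, if_neg hh] at hl
    · intro ⟨h1, h2⟩
      rw [List.length_eq_zero_iff] at h1
      subst h1
      have : (h : ℤ) = 0 := (MPZ_nil _).1 h2
      have : h = 0 := by exact_mod_cast this
      subst this
      simp [MFin]
  | succ L ih =>
    intro h l
    show l ∈ (MFin L (h+1)).image (MStep.up :: ·) ∪ (MFin L h).image (MStep.flat :: ·) ∪
      (if h = 0 then ∅ else (MFin L (h-1)).image (MStep.down :: ·)) ↔ _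
    constructor
    · intro hl
      rcases Finset.mem_union.1 hl with hl' | hl'
      · rcases Finset.mem_union.1 hl' with hl'' | hl''
        · obtain ⟨t, ht, rfl⟩ := Finset.mem_image.1 hl''
          obtain ⟨ht1, ht2⟩ := (ih (h+1) t).1 ht
          refine ⟨by simp [ht1], (MPZ_cons _ (by positivity) _ _).2 ⟨by simp only [MStep.val]; positivity, ?_⟩⟩
          show MPZ ((h:ℤ) + MStep.up.val) t
          have : (h:ℤ) + MStep.up.val = ((h+1 : ℕ) : ℤ) := by simp [MStep.val]
          rw [this]; exact ht2
        · obtain ⟨t, ht, rfl⟩ := Finset.mem_image.1 hl''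
          obtain ⟨ht1, ht2⟩ := (ih h t).1 ht
          refine ⟨by simp [ht1], (MPZ_cons _ (by positivity) _ _).2 ⟨by simp only [MStep.val]; positivity, ?_⟩⟩
          show MPZ ((h:ℤ) + MStep.flat.val) t
          have : (h:ℤ) + MStep.flat.val = (h : ℤ) := by simp [MStep.val]
          rw [this]; exact ht2
      · by_cases hh : h = 0
        · rw [hh] at hl'; simp at hl'
        · rw [if_neg hh] at hl'
          obtain ⟨t, ht, rfl⟩ := Finset.mem_image.1 hl'
          obtain ⟨ht1, ht2⟩ := (ih (h-1) t).1 ht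
          refine ⟨by simp [ht1], (MPZ_cons _ (by positivity) _ _).2 ⟨?_, ?_⟩⟩
          · show (0:ℤ) ≤ (h:ℤ) + MStep.down.val
            simp only [MStep.val]; omega
          · show MPZ ((h:ℤ) + MStep.down.val) t
            have : (h:ℤ) + MStep.down.val = ((h-1 : ℕ) : ℤ) := by
              simp only [MStep.val]; omega
            rw [this]; exact ht2
    · intro ⟨h1, h2⟩
      cases l with
      | nil => simp at h1
      | cons σ t =>
        have h1' : t.length = L := by simpa using h1
        obtain ⟨hge, hmp⟩ := (MPZ_cons _ (by positivity) _ _).1 h2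
        apply Finset.mem_union.2
        cases σ with
        | up =>
          refine Or.inl (Finset.mem_union.2 (Or.inl (Finset.mem_image.2 ⟨t, ?_, rfl⟩)))
          refine (ih (h+1) t).2 ⟨h1', ?_⟩
          have : ((h+1 : ℕ) : ℤ) = (h:ℤ) + MStep.up.val := by simp [MStep.val]
          rw [this]; exact hmp
        | flat =>
          refine Or.inl (Finset.mem_union.2 (Or.inr (Finset.mem_image.2 ⟨t, ?_, rfl⟩)))
          refine (ih h t).2 ⟨h1', ?_⟩
          have : ((h : ℕ) : ℤ) = (h:ℤ) + MStep.flat.val := by simp [MStep.val]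
          rw [this]; exact hmp
        | down =>
          have hh : h ≠ 0 := by
            intro hh; rw [hh] at hge; simp [MStep.val] at hge
          refine Or.inr ?_
          rw [if_neg hh]
          refine Finset.mem_image.2 ⟨t, ?_, rfl⟩
          refine (ih (h-1) t).2 ⟨h1', ?_⟩
          have : ((h-1 : ℕ) : ℤ) = (h:ℤ) + MStep.down.val := by
            simp only [MStep.val]; omega
          rw [this]; exact hmp

lemma motzkin_eq_Gcnt (s : ℕ) : motzkin s = Gcnt s 0 := by
  rw [motzkin, ← MFin_card s 0, ← Nat.card_eq_finsetCard]
  apply Nat.card_congr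
  apply Equiv.subtypeEquivRight
  intro l
  rw [MFin_mem s 0 l]
  have : IsMotzkinPath l ↔ MPZ ((0:ℕ) : ℤ) l := by
    unfold IsMotzkinPath MPZ
    simp
  rw [this]

/-! ### Counting cap-sequences -/

def CapSeq : ℕ → ℕ → List ℕ → Prop
  | _, _, [] => True
  | a, b, (v :: t) => v ≤ min a b + 1 ∧ CapSeq b v t

def MLst : ℕ → ℕ → ℕ → Finset (List ℕ)
  | 0, _, _ => {[]}
  | (L+1), a, b => (Finset.range (min a b + 2)).biUnion (fun v => (MLst L b v).image (v :: ·))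

lemma MLst_card : ∀ L a b, (MLst L a b).card = Fcnt L a b := by
  intro L
  induction L with
  | zero => intro a b; simp [MLst, Fcnt]
  | succ L ih =>
    intro a b
    show ((Finset.range (min a b + 2)).biUnion (fun v => (MLst L b v).image (v :: ·))).card = _
    rw [Finset.card_biUnion, Fcnt_succ]
    · apply Finset.sum_congr rfl
      intro v _
      rw [Finset.card_image_of_injective _ (fun x y hxy => by simpa using hxy), ih]
    · intro x _ y _ hxy
      rw [Function.onFun, Finset.disjoint_left]
      rintro l hl hl'
      obtain ⟨u, _, rfl⟩ := Finset.mem_image.1 hl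
      obtain ⟨w, _, hw⟩ := Finset.mem_image.1 hl'
      injection hw with h1 _
      exact hxy h1.symm

lemma MLst_mem : ∀ L a b (l : List ℕ), l ∈ MLst L a b ↔ (l.length = L ∧ CapSeq a b l) := by
  intro L
  induction L with
  | zero =>
    intro a b l
    show l ∈ ({[]} : Finset (List ℕ)) ↔ _
    rw [Finset.mem_singleton]
    constructor
    · rintro rfl; exact ⟨rfl, trivial⟩
    · intro ⟨h1, _⟩; exact List.length_eq_zero_iff.1 h1
  | succ L ih =>
    intro a b l
    show l ∈ (Finset.range (min a b + 2)).biUnion (fun v => (MLst L b v).image (v :: ·)) ↔ _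
    rw [Finset.mem_biUnion]
    constructor
    · rintro ⟨v, hv, hl⟩
      obtain ⟨t, ht, rfl⟩ := Finset.mem_image.1 hl
      obtain ⟨ht1, ht2⟩ := (ih b v t).1 ht
      exact ⟨by simp [ht1], ⟨by simp only [Finset.mem_range] at hv; omega, ht2⟩⟩
    · intro ⟨h1, h2⟩
      cases l with
      | nil => simp at h1
      | cons v t =>
        obtain ⟨hv, hcs⟩ := h2
        exact ⟨v, by simp; omega, Finset.mem_image.2 ⟨t, (ih b v t).2 ⟨by simpa using h1, hcs⟩, rfl⟩⟩

/-! ### Partition basics: conjugate, Galois property, Maya sets -/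

lemma nat_eq_of_lt_iff {a b : ℕ} (h : ∀ i, i < a ↔ i < b) : a = b := by
  rcases Nat.lt_trichotomy a b with h' | h' | h'
  · have := (h a).2 h'; omega
  · exact h'
  · have := (h b).1 h'; omega

namespace YPartition

lemma lt_conj_iff (p : YPartition) (i j : ℕ) : i < p.conj j ↔ j < p.parts i := by
  obtain ⟨N, hN⟩ := p.support_finite
  set n := sInf {i | p.parts i ≤ j} with hn
  have hne : {i | p.parts i ≤ j}.Nonempty := ⟨N, by simp [hN N le_rfl]⟩
  have hmem : p.parts n ≤ j := Nat.sInf_mem hne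
  have hiff : ∀ i, j < p.parts i ↔ i < n := by
    intro i
    constructor
    · intro h
      by_contra hc
      push_neg at hc
      have := p.antitone hc
      omega
    · intro h
      by_contra hc
      push_neg at hc
      have : n ≤ i := Nat.sInf_le hc
      omega
  have hset : {i | j < p.parts i} = Set.Iio n := Set.ext fun i => hiff i
  have : p.conj j = n := by
    rw [conj, hset, ← Finset.coe_range, Set.ncard_coe_finset, Finset.card_range]
  rw [this]
  exact (hiff i).symm

lemma galois_of_selfConj {p : YPartition} (hsc : p.IsSelfConjugate) :
    ∀ i j, j < p.parts i ↔ i < p.parts j := by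
  intro i j
  rw [← hsc j, lt_conj_iff]

lemma selfConj_of_galois {p : YPartition} (hg : ∀ i j, j < p.parts i ↔ i < p.parts j) :
    p.IsSelfConjugate := by
  intro j
  apply nat_eq_of_lt_iff
  intro i
  rw [lt_conj_iff, hg]

/-- `x` is a positive Maya element (arm length of a diagonal hook) of `p`. -/
def MayaPos (p : YPartition) (x : ℕ) : Prop := ∃ i, p.parts i = x + i + 1

/-- The dichotomy: for each `n ≥ 0`, either `n` is a positive Maya element or
`-1-n` is a (negative) Maya element, but not both. -/
lemma maya_dichot {p : YPartition} (hg : ∀ i j, j < p.parts i ↔ i < p.parts j) (n : ℕ) :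
    p.MayaPos n ↔ ¬ (∃ i, p.parts i + n = i) := by
  constructor
  · rintro ⟨j, hj⟩ ⟨i, hi⟩
    have h := hg i j
    omega
  · intro hno
    obtain ⟨N, hN⟩ := p.support_finite
    set S := {i | p.parts i + n ≤ i} with hS
    have hne : S.Nonempty := ⟨N + n, by simp only [hS, Set.mem_setOf_eq, hN (N+n) (by omega)]; omega⟩
    set i₀ := sInf S with hi₀
    have hmem : p.parts i₀ + n ≤ i₀ := Nat.sInf_mem hne
    have hstrict : p.parts i₀ + n + 1 ≤ i₀ := by
      rcases Nat.lt_or_ge (p.parts i₀ + n) i₀ with h | h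
      · omega
      · exact absurd ⟨i₀, by omega⟩ hno
    have hj₀ : ¬ (i₀ - 1 ∈ S) := fun hc => by
      have := Nat.sInf_le hc; omega
    simp only [hS, Set.mem_setOf_eq, not_le] at hj₀
    set j₀ := i₀ - 1 with hj₀def
    have hn_le : n ≤ j₀ := by omega
    set k := j₀ - n with hk
    have h1 : k < p.parts j₀ := by omega
    have h2 : j₀ < p.parts k := (hg j₀ k).1 h1
    rcases Nat.lt_or_ge (k + n + 1) (p.parts k) with h3 | h3
    · have h4 : k < p.parts (k + n + 1) := (hg k (k+n+1)).1 h3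
      have : k + n + 1 = i₀ := by omega
      rw [this] at h4
      omega
    · exact ⟨k, by omega⟩

/-- The finite set of positive Maya elements of `p`. -/
noncomputable def PF (p : YPartition) : Finset ℕ :=
  ((Finset.range (p.parts 0)).filter (fun i => i < p.parts i)).image
    (fun i => p.parts i - i - 1)

lemma mem_PF (p : YPartition) (x : ℕ) : x ∈ p.PF ↔ p.MayaPos x := by
  constructor
  · intro hx
    obtain ⟨i, hi, rfl⟩ := Finset.mem_image.1 hx
    simp only [Finset.mem_filter, Finset.mem_range] at hi
    exact ⟨i, by omega⟩
  · rintro ⟨i, hi⟩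
    apply Finset.mem_image.2
    refine ⟨i, ?_, by omega⟩
    simp only [Finset.mem_filter, Finset.mem_range]
    have : p.parts i ≤ p.parts 0 := p.antitone (Nat.zero_le i)
    omega

end YPartition

/-! ### Counting elements above a threshold in a finite set of naturals -/

/-- The number of elements of `P` that are `≥ m`. -/
def cnt (P : Finset ℕ) (m : ℕ) : ℕ := (P.filter (fun q => m ≤ q)).card

lemma cnt_mono (P : Finset ℕ) {m m' : ℕ} (h : m ≤ m') : cnt P m' ≤ cnt P m := by
  apply Finset.card_le_card
  intro q hq
  simp only [Finset.mem_filter] at hq ⊢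
  exact ⟨hq.1, le_trans h hq.2⟩

lemma cnt_step (P : Finset ℕ) (m : ℕ) : cnt P m ≤ cnt P (m+1) + 1 := by
  have : P.filter (fun q => m ≤ q) ⊆ insert m (P.filter (fun q => m+1 ≤ q)) := by
    intro q hq
    simp only [Finset.mem_filter] at hq
    rcases Nat.eq_or_lt_of_le hq.2 with h | h
    · simp [← h]
    · simp only [Finset.mem_insert, Finset.mem_filter]
      right; exact ⟨hq.1, by omega⟩
  calc cnt P m ≤ (insert m (P.filter (fun q => m+1 ≤ q))).card := Finset.card_le_card this
    _ ≤ cnt P (m+1) + 1 := Finset.card_insert_le _ _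

lemma cnt_zero (P : Finset ℕ) : cnt P 0 = P.card := by
  unfold cnt
  rw [Finset.filter_true_of_mem (fun q _ => Nat.zero_le q)]

lemma cnt_le_card (P : Finset ℕ) (m : ℕ) : cnt P m ≤ P.card :=
  Finset.card_le_card (Finset.filter_subset _ _)

lemma cnt_lt_of_mem {P : Finset ℕ} {x : ℕ} (hx : x ∈ P) : cnt P (x+1) < cnt P x := by
  have : insert x (P.filter (fun q => x+1 ≤ q)) ⊆ P.filter (fun q => x ≤ q) := by
    intro q hq
    simp only [Finset.mem_insert, Finset.mem_filter] at hq ⊢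
    rcases hq with rfl | ⟨h1, h2⟩
    · exact ⟨hx, le_rfl⟩
    · exact ⟨h1, by omega⟩
  have hcard := Finset.card_le_card this
  rw [Finset.card_insert_of_notMem (by simp)] at hcard
  unfold cnt; omega

lemma mem_of_cnt_lt {P : Finset ℕ} {x : ℕ} (h : cnt P (x+1) < cnt P x) : x ∈ P := by
  by_contra hx
  have : P.filter (fun q => x ≤ q) = P.filter (fun q => x+1 ≤ q) := by
    apply Finset.filter_congr
    intro q hq
    constructor
    · intro h'
      rcases Nat.eq_or_lt_of_le h' with h'' | h''
      · exact absurd (h'' ▸ hq) hx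
      · simpa using h''
    · intro h'; omega
  unfold cnt at h; rw [this] at h; omega

lemma card_le_cnt_add (P : Finset ℕ) (m : ℕ) : P.card ≤ cnt P m + m := by
  have hsub : P ⊆ (P.filter (fun q => m ≤ q)) ∪ Finset.range m := by
    intro q hq
    simp only [Finset.mem_union, Finset.mem_filter, Finset.mem_range]
    exact if h : m ≤ q then Or.inl ⟨hq, h⟩ else Or.inr (by omega)
  calc P.card ≤ ((P.filter (fun q => m ≤ q)) ∪ Finset.range m).card := Finset.card_le_card hsub
    _ ≤ cnt P m + m := by
        have := Finset.card_union_le (P.filter (fun q => m ≤ q)) (Finset.range m)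
        rw [Finset.card_range] at this
        exact this

lemma cnt_eq_zero_of_all_lt {P : Finset ℕ} {m : ℕ} (h : ∀ q ∈ P, q < m) : cnt P m = 0 := by
  unfold cnt
  rw [Finset.card_eq_zero, Finset.filter_eq_empty_iff]
  intro q hq
  have := h q hq
  omega

/-- A "lower" finite set of naturals equals an initial segment. -/
lemma lower_mem_iff {K : Finset ℕ} (hK : ∀ a b, a ≤ b → b ∈ K → a ∈ K) (n : ℕ) :
    n ∈ K ↔ n < K.card := by
  constructor
  · intro hn
    have : Finset.range (n+1) ⊆ K := fun a ha => hK a n (by simpa using Nat.lt_succ_iff.1 (Finset.mem_range.1 ha)) hn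
    have := Finset.card_le_card this
    rw [Finset.card_range] at this
    omega
  · intro hn
    by_contra hc
    have : K ⊆ Finset.range n := by
      intro q hq
      rw [Finset.mem_range]
      by_contra hq'
      exact hc (hK n q (by omega) hq)
    have := Finset.card_le_card this
    rw [Finset.card_range] at this
    omega

/-! ### The cell predicate and the key counting lemma -/

/-- `CC P i j`: the cell `(i,j)` belongs to the self-conjugate diagram whose
positive Maya set is `P`. -/
def CC (P : Finset ℕ) (i j : ℕ) : Prop := i < cnt P (j - i) ∨ j < cnt P (i - j)

lemma CC_symm (P : Finset ℕ) (i j : ℕ) : CC P i j ↔ CC P j i := Or.comm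

lemma CC_mono_j {P : Finset ℕ} {i j : ℕ} (h : CC P i (j+1)) : CC P i j := by
  rcases h with h | h
  · left
    have := cnt_mono P (show j - i ≤ j + 1 - i by omega)
    omega
  · right
    rcases le_or_gt i j with hij | hij
    · have h0 : i - (j+1) = 0 := by omega
      have h0' : i - j = 0 := by omega
      rw [h0] at h
      rw [h0']
      omega
    · have hst := cnt_step P (i - (j+1))
      have : i - (j+1) + 1 = i - j := by omega
      rw [this] at hst
      omega

lemma CC_dc_j {P : Finset ℕ} {i j j' : ℕ} (hj : j' ≤ j) (h : CC P i j) : CC P i j' := by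
  induction j with
  | zero =>
    obtain rfl := Nat.le_zero.mp hj
    exact h
  | succ j ih =>
    rcases Nat.eq_or_lt_of_le hj with rfl | hlt
    · exact h
    · exact ih (by omega) (CC_mono_j h)

lemma CC_dc_i {P : Finset ℕ} {i i' j : ℕ} (hi : i' ≤ i) (h : CC P i j) : CC P i' j :=
  (CC_symm P i' j).2 (CC_dc_j hi ((CC_symm P i j).1 h))

namespace YPartition

/-- Key counting lemma: membership of thresholds in the positive Maya set. -/
lemma key_count (p : YPartition) (i m : ℕ) :
    i < cnt p.PF m ↔ m + i + 1 ≤ p.parts i := by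
  classical
  -- the filtered Durfee set
  set D := (Finset.range (p.parts 0)).filter (fun k => k < p.parts k) with hD
  set K := D.filter (fun k => m + k + 1 ≤ p.parts k) with hK
  have hKmem : ∀ k, k ∈ K ↔ (k < p.parts 0 ∧ k < p.parts k ∧ m + k + 1 ≤ p.parts k) := by
    intro k
    simp only [hK, hD, Finset.mem_filter, Finset.mem_range]
    tauto
  have himg : p.PF.filter (fun q => m ≤ q) = K.image (fun k => p.parts k - k - 1) := by
    apply Finset.ext
    intro q
    rw [Finset.mem_filter, Finset.mem_image]
    constructor
    · rintro ⟨hq, hmq⟩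
      rw [PF, Finset.mem_image] at hq
      obtain ⟨k, hk, rfl⟩ := hq
      simp only [Finset.mem_filter, Finset.mem_range] at hk
      exact ⟨k, (hKmem k).2 ⟨hk.1, hk.2, by omega⟩, rfl⟩
    · rintro ⟨k, hk, rfl⟩
      obtain ⟨hk1, hk2, hk3⟩ := (hKmem k).1 hk
      constructor
      · rw [PF, Finset.mem_image]
        exact ⟨k, by simp only [Finset.mem_filter, Finset.mem_range]; exact ⟨hk1, hk2⟩, rfl⟩
      · omega
  have hinj : Set.InjOn (fun k => p.parts k - k - 1) K := by
    intro a ha b hb hab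
    rw [Finset.mem_coe, hKmem] at ha hb
    simp only at hab
    by_contra hne
    rcases Nat.lt_or_ge a b with h | h
    · have := p.antitone (le_of_lt h); omega
    · have hba : b < a := by omega
      have := p.antitone (le_of_lt hba); omega
  have hcnt : cnt p.PF m = K.card := by
    unfold cnt
    rw [himg, Finset.card_image_of_injOn hinj]
  have hlower : ∀ a b, a ≤ b → b ∈ K → a ∈ K := by
    intro a b hab hb
    rw [hKmem] at hb ⊢
    have h1 := p.antitone hab
    obtain ⟨hb1, hb2, hb3⟩ := hb
    exact ⟨by omega, by omega, by omega⟩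
  rw [hcnt, ← lower_mem_iff hlower, hKmem]
  constructor
  · rintro ⟨_, _, h⟩; exact h
  · intro h
    have : p.parts i ≤ p.parts 0 := p.antitone (Nat.zero_le i)
    exact ⟨by omega, by omega, h⟩

/-- The cell lemma: boxes of a self-conjugate partition are described by `CC` on
its positive Maya set. -/
lemma cell {p : YPartition} (hg : ∀ i j, j < p.parts i ↔ i < p.parts j) (i j : ℕ) :
    j < p.parts i ↔ CC p.PF i j := by
  unfold CC
  rw [key_count, key_count]
  constructor
  · intro h
    rcases le_or_gt i j with hij | hij
    · left; omega
    · right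
      have := (hg i j).1 h
      omega
  · intro h
    rcases h with h | h
    · rcases le_or_gt i j with hij | hij
      · omega
      · -- j - i = 0, so i < parts i, and parts i > i > j
        omega
    · rcases le_or_gt j i with hij | hij
      · -- i - j + j + 1 ≤ parts j, so i < parts j
        have : i < p.parts j := by omega
        exact (hg j i).1 this
      · have : i < p.parts j := by omega
        exact (hg j i).1 this

end YPartition

/-! ### Constructing a self-conjugate partition from a finite set of arm lengths -/

namespace YPartition

/-- The row lengths of the self-conjugate partition with positive Maya set `P`. -/
noncomputable def fpart (P : Finset ℕ) (i : ℕ) : ℕ := sInf {j | ¬ CC P i j}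

lemma fpart_compl_nonempty (P : Finset ℕ) (i : ℕ) : {j | ¬ CC P i j}.Nonempty := by
  refine ⟨P.card + (P.sup id) + 1 + i, ?_⟩
  simp only [Set.mem_setOf_eq, CC, not_or, not_lt]
  constructor
  · have : cnt P (P.card + (P.sup id) + 1 + i - i) = 0 := by
      apply cnt_eq_zero_of_all_lt
      intro q hq
      have : q ≤ P.sup id := Finset.le_sup (f := id) hq
      omega
    omega
  · have := cnt_le_card P (i - (P.card + (P.sup id) + 1 + i))
    omega

lemma lt_fpart_iff (P : Finset ℕ) (i j : ℕ) : j < fpart P i ↔ CC P i j := by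
  constructor
  · intro h
    by_contra hc
    have := Nat.sInf_le (show j ∈ {j | ¬ CC P i j} from hc)
    rw [fpart] at h
    omega
  · intro h
    by_contra hc
    push_neg at hc
    have hmem : ¬ CC P i (fpart P i) := Nat.sInf_mem (fpart_compl_nonempty P i)
    exact hmem (CC_dc_j hc h)

lemma fpart_antitone (P : Finset ℕ) : ∀ {i i' : ℕ}, i ≤ i' → fpart P i' ≤ fpart P i := by
  intro i i' hii
  by_contra hc
  push_neg at hc
  have h1 : fpart P i < fpart P i' := hc
  have h2 : CC P i' (fpart P i) := (lt_fpart_iff P i' _).1 h1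
  have h3 : CC P i (fpart P i) := CC_dc_i hii h2
  have := (lt_fpart_iff P i _).2 h3
  omega

lemma fpart_eventually_zero (P : Finset ℕ) :
    ∀ i, P.card + P.sup id + 1 ≤ i → fpart P i = 0 := by
  intro i hi
  have h0 : ¬ CC P i 0 := by
    simp only [CC, not_or, not_lt]
    constructor
    · have h1 : cnt P (0 - i) ≤ P.card := cnt_le_card P _
      omega
    · have : cnt P (i - 0) = 0 := by
        apply cnt_eq_zero_of_all_lt
        intro q hq
        have : q ≤ P.sup id := Finset.le_sup (f := id) hq
        omega
      omega
  have := Nat.sInf_le (show 0 ∈ {j | ¬ CC P i j} from h0)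
  rw [fpart]
  omega

/-- The self-conjugate partition with positive Maya set `P`. -/
noncomputable def ofFinset (P : Finset ℕ) : YPartition where
  parts := fpart P
  antitone := fun _ _ h => fpart_antitone P h
  support_finite := ⟨P.card + P.sup id + 1, fun i hi => fpart_eventually_zero P i hi⟩

lemma ofFinset_galois (P : Finset ℕ) :
    ∀ i j, j < (ofFinset P).parts i ↔ i < (ofFinset P).parts j := by
  intro i j
  show j < fpart P i ↔ i < fpart P j
  rw [lt_fpart_iff, lt_fpart_iff, CC_symm]

lemma ofFinset_selfConjugate (P : Finset ℕ) : (ofFinset P).IsSelfConjugate :=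
  selfConj_of_galois (ofFinset_galois P)

lemma ofFinset_mayaPos (P : Finset ℕ) (x : ℕ) : (ofFinset P).MayaPos x ↔ x ∈ P := by
  constructor
  · rintro ⟨i, hi⟩
    -- fpart P i = x + i + 1
    have h1 : CC P i (x + i) := by
      rw [← lt_fpart_iff]
      show x + i < (ofFinset P).parts i
      omega
    have h2 : ¬ CC P i (x + i + 1) := by
      rw [← lt_fpart_iff]
      show ¬ (x + i + 1 < (ofFinset P).parts i)
      omega
    simp only [CC, not_or, not_lt] at h2
    have e1 : x + i - i = x := by omega
    have e2 : x + i + 1 - i = x + 1 := by omega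
    have e3 : i - (x + i) = 0 := by omega
    have e4 : i - (x + i + 1) = 0 := by omega
    rw [e2, e4] at h2
    obtain ⟨h2a, h2b⟩ := h2
    rw [cnt_zero] at h2b
    rcases h1 with h1 | h1
    · rw [e1] at h1
      exact mem_of_cnt_lt (by omega)
    · rw [e3, cnt_zero] at h1
      -- P.card = x + i + 1, cnt P (x+1) ≤ i, so [0,x] ⊆ P
      have hQ : (P.filter (fun q => q ≤ x)).card + cnt P (x+1) = P.card := by
        have h' : P.filter (fun q => q ≤ x) = P \ P.filter (fun q => x+1 ≤ q) := by
          apply Finset.ext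
          intro q
          simp only [Finset.mem_filter, Finset.mem_sdiff, not_and, not_le]
          constructor
          · rintro ⟨hq1, hq2⟩; exact ⟨hq1, fun _ => by omega⟩
          · rintro ⟨hq1, hq2⟩; exact ⟨hq1, by have := hq2 hq1; omega⟩
        rw [h', Finset.card_sdiff_of_subset (Finset.filter_subset _ _)]
        have := cnt_le_card P (x+1)
        unfold cnt at *
        omega
      have hsub : P.filter (fun q => q ≤ x) ⊆ Finset.range (x+1) := by
        intro q hq
        simp only [Finset.mem_filter] at hq
        simp only [Finset.mem_range]
        omega
      have : Finset.range (x+1) = P.filter (fun q => q ≤ x) := by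
        apply (Finset.eq_of_subset_of_card_le hsub ?_).symm
        rw [Finset.card_range]
        omega
      have hx : x ∈ P.filter (fun q => q ≤ x) := by
        rw [← this]
        simp
      exact (Finset.mem_filter.1 hx).1
  · intro hx
    refine ⟨cnt P (x+1), ?_⟩
    have hlt := cnt_lt_of_mem hx
    have hcard := card_le_cnt_add P (x+1)
    set i := cnt P (x+1) with hi
    have h1 : CC P i (x + i) := by
      left
      have : x + i - i = x := by omega
      rw [this]
      omega
    have h2 : ¬ CC P i (x + i + 1) := by
      simp only [CC, not_or, not_lt]
      constructor
      · have : x + i + 1 - i = x + 1 := by omega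
        rw [this]
      · have : i - (x + i + 1) = 0 := by omega
        rw [this, cnt_zero]
        omega
    have g1 : x + i < fpart P i := (lt_fpart_iff P i _).2 h1
    have g2 : ¬ (x + i + 1 < fpart P i) := fun hc => h2 ((lt_fpart_iff P i _).1 hc)
    show fpart P i = x + i + 1
    omega

lemma ofFinset_PF (P : Finset ℕ) : (ofFinset P).PF = P := by
  apply Finset.ext
  intro x
  rw [mem_PF, ofFinset_mayaPos]

/-- Uniqueness: a self-conjugate partition is determined by its positive Maya set. -/
lemma eq_ofFinset {p : YPartition} (hsc : p.IsSelfConjugate) : p = ofFinset p.PF := by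
  have hg := galois_of_selfConj hsc
  have hparts : p.parts = fpart p.PF := by
    funext i
    apply nat_eq_of_lt_iff
    intro j
    rw [lt_fpart_iff]
    exact cell hg i j
  cases p
  simp only [ofFinset, YPartition.mk.injEq]
  exact hparts

end YPartition

/-! ### Translating the core conditions -/

/-- Closure under subtracting `t`. -/
def CondOne (t : ℕ) (P : Finset ℕ) : Prop := ∀ x ∈ P, t ≤ x → x - t ∈ P

/-- No two elements (with repetition) have `x + y + 1` divisible by `t`. -/
def CondTwo (t : ℕ) (P : Finset ℕ) : Prop := ∀ x ∈ P, ∀ y ∈ P, ¬ (t ∣ (x + y + 1))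

namespace YPartition

lemma hook_eq {p : YPartition} (hsc : p.IsSelfConjugate) (i j : ℕ) :
    p.hook i j = p.parts i + p.parts j - i - j - 1 := by
  rw [hook, hsc j]

lemma isCore_iff {p : YPartition} (hsc : p.IsSelfConjugate) {t : ℕ} (ht : 0 < t) :
    p.IsCore t ↔ (CondOne t p.PF ∧ CondTwo t p.PF) := by
  have hg := galois_of_selfConj hsc
  constructor
  · intro hcore
    constructor
    · -- CondOne
      intro x hx htx
      rw [mem_PF] at hx ⊢
      obtain ⟨i, hi⟩ := hx
      by_contra hno
      rw [maya_dichot hg, not_not] at hno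
      obtain ⟨j, hj⟩ := hno
      have hbox : j < p.parts i := by
        by_contra hc
        push_neg at hc
        have h := hg i j
        omega
      have hhook : p.hook i j = t := by
        rw [hook_eq hsc]
        omega
      exact hcore i j hbox (hhook ▸ dvd_refl t)
    · -- CondTwo
      intro x hx y hy hdvd
      rw [mem_PF] at hx hy
      obtain ⟨i, hi⟩ := hx
      obtain ⟨j, hj⟩ := hy
      have hbox : j < p.parts i := by
        by_contra hc
        push_neg at hc
        have h := hg i j
        omega
      have hhook : p.hook i j = x + y + 1 := by
        rw [hook_eq hsc]
        have h := hg i j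
        omega
      exact hcore i j hbox (hhook ▸ hdvd)
  · rintro ⟨h1, h2⟩ i j hbox hdvd
    have hbox' : i < p.parts j := (hg i j).1 hbox
    have hookeq := hook_eq hsc i j
    -- not both outside the Durfee square
    have hcase : ¬ (p.parts i ≤ i ∧ p.parts j ≤ j) := by
      rintro ⟨ha, hb⟩
      omega
    by_cases hdi : i < p.parts i
    · by_cases hdj : j < p.parts j
      · -- both diagonal: CondTwo
        set x := p.parts i - i - 1 with hxdef
        set y := p.parts j - j - 1 with hydef
        have hx : x ∈ p.PF := (mem_PF p x).2 ⟨i, by omega⟩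
        have hy : y ∈ p.PF := (mem_PF p y).2 ⟨j, by omega⟩
        have : p.hook i j = x + y + 1 := by omega
        exact h2 x hx y hy (this ▸ hdvd)
      · -- j outside: mixed case
        push_neg at hdj
        set x := p.parts i - i - 1 with hxdef
        set n := j - p.parts j with hndef
        have hx : x ∈ p.PF := (mem_PF p x).2 ⟨i, by omega⟩
        have hn : ¬ (n ∈ p.PF) := by
          rw [mem_PF, maya_dichot hg, not_not]
          exact ⟨j, by omega⟩
        have hhook : p.hook i j = x - n := by omega
        have hnx : n < x := by omega
        obtain ⟨k, hk⟩ := hdvd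
        rw [Nat.mul_comm] at hk
        have hk1 : 1 ≤ k := by
          rcases Nat.eq_zero_or_pos k with rfl | h
          · omega
          · exact h
        have key : ∀ d, d ≤ k → (x - d * t) ∈ p.PF := by
          intro d
          induction d with
          | zero => intro _; simpa using hx
          | succ d ih =>
            intro hd
            have hdt : (d+1) * t = d * t + t := by ring
            have hcur : x - d * t ∈ p.PF := ih (by omega)
            have hge : t ≤ x - d * t := by
              have : d * t + t ≤ k * t := by
                have : d + 1 ≤ k := hd
                calc d * t + t = (d+1) * t := by ring
                  _ ≤ k * t := Nat.mul_le_mul_right t this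
              omega
            have := h1 _ hcur hge
            have e : x - d * t - t = x - (d+1) * t := by omega
            rwa [e] at this
        have := key k le_rfl
        have : n ∈ p.PF := by
          have e : x - k * t = n := by omega
          rwa [e] at this
        exact hn this
    · -- i outside, so j diagonal
      push_neg at hdi
      have hdj : j < p.parts j := by omega
      set x := p.parts j - j - 1 with hxdef
      set n := i - p.parts i with hndef
      have hx : x ∈ p.PF := (mem_PF p x).2 ⟨j, by omega⟩
      have hn : ¬ (n ∈ p.PF) := by
        rw [mem_PF, maya_dichot hg, not_not]
        exact ⟨i, by omega⟩
      have hhook : p.hook i j = x - n := by omega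
      have hnx : n < x := by omega
      obtain ⟨k, hk⟩ := hdvd
      rw [Nat.mul_comm] at hk
      have hk1 : 1 ≤ k := by
        rcases Nat.eq_zero_or_pos k with rfl | h
        · omega
        · exact h
      have key : ∀ d, d ≤ k → (x - d * t) ∈ p.PF := by
        intro d
        induction d with
        | zero => intro _; simpa using hx
        | succ d ih =>
          intro hd
          have hdt : (d+1) * t = d * t + t := by ring
          have hcur : x - d * t ∈ p.PF := ih (by omega)
          have hge : t ≤ x - d * t := by
            have : d * t + t ≤ k * t := by
              have h' : d + 1 ≤ k := hd
              calc d * t + t = (d+1) * t := by ring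
                _ ≤ k * t := Nat.mul_le_mul_right t h'
            omega
          have := h1 _ hcur hge
          have e : x - d * t - t = x - (d+1) * t := by omega
          rwa [e] at this
      have := key k le_rfl
      have : n ∈ p.PF := by
        have e : x - k * t = n := by omega
        rwa [e] at this
      exact hn this

lemma md_iff {p : YPartition} (hsc : p.IsSelfConjugate) (s : ℕ) :
    (∀ j, 1 ≤ j → j ≤ s → (2 * j - 1) ∉ p.MD) ↔ (∀ x ∈ p.PF, s ≤ x) := by
  constructor
  · intro h x hx
    rw [mem_PF] at hx
    obtain ⟨i, hi⟩ := hx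
    by_contra hc
    push_neg at hc
    apply h (x + 1) (by omega) (by omega)
    refine ⟨i, by omega, ?_⟩
    rw [hook_eq hsc]
    omega
  · rintro h j h1 h2 ⟨i, hdur, heq⟩
    rw [hook_eq hsc] at heq
    set x := p.parts i - i - 1 with hxdef
    have hx : x ∈ p.PF := (mem_PF p x).2 ⟨i, by omega⟩
    have := h x hx
    omega

end YPartition

/-! ### Classification of valid arm sets -/

lemma NDIV (n a r : ℕ) (h1 : 0 < r) (h2 : r < n) : ¬ (n ∣ a * n + r) := by
  intro hdvd
  have h3 : (a * n + r) % n = r := by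
    rw [Nat.add_comm, Nat.add_mul_mod_self_right, Nat.mod_eq_of_lt h2]
  obtain ⟨c, hc⟩ := hdvd
  rw [hc, Nat.mul_mod_right] at h3
  omega

lemma BU {n a b c d : ℕ} (hn : 0 < n) (hc : c < n) (hd : d < n) (h : a * n + c = b * n + d) :
    a = b ∧ c = d := by
  have h1 : (a * n + c) % n = c := by
    rw [Nat.add_comm, Nat.add_mul_mod_self_right, Nat.mod_eq_of_lt hc]
  have h2 : (b * n + d) % n = d := by
    rw [Nat.add_comm, Nat.add_mul_mod_self_right, Nat.mod_eq_of_lt hd]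
  have hcd : c = d := by rw [← h1, ← h2, h]
  subst hcd
  have : a * n = b * n := by omega
  exact ⟨Nat.eq_of_mul_eq_mul_right hn this, rfl⟩

section Classification

variable (s : ℕ)

/-- All conditions on the arm set of a valid partition. -/
def PCond (P : Finset ℕ) : Prop :=
  (∀ x ∈ P, s ≤ x) ∧
  CondOne (2*s) P ∧ CondOne (2*s+1) P ∧ CondOne (2*s+2) P ∧
  CondTwo (2*s) P ∧ CondTwo (2*s+1) P ∧ CondTwo (2*s+2) P

variable {s}

/-- Band lemma: every element of a valid arm set has the band form. -/
lemma band_form (hs : 0 < s) {P : Finset ℕ} (hP : PCond s P) :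
    ∀ x ∈ P, ∃ k u, 1 ≤ u ∧ u ≤ s - 1 ∧ x = k * (2*s+2) + s + u := by
  obtain ⟨hmin, hc1a, hc1b, hc1c, hc2a, hc2b, hc2c⟩ := hP
  intro x
  induction x using Nat.strong_induction_on with
  | _ x ih =>
    intro hx
    have hxs : s ≤ x := hmin x hx
    have hxne : x ≠ s := by
      intro hxx
      exact hc2b x hx x hx ⟨1, by omega⟩
    rcases Nat.lt_or_ge x (2*s) with hlt | hge
    · exact ⟨0, x - s, by omega, by omega, by omega⟩
    · rcases Nat.lt_or_ge x (2*s+2) with hlt2 | hge2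
      · -- x = 2s or 2s+1 : impossible
        exfalso
        have hy : x - 2*s ∈ P := hc1a x hx (by omega)
        have hys : s ≤ x - 2*s := hmin _ hy
        have : x - 2*s = s := by omega
        exact hc2b _ hy _ hy ⟨1, by omega⟩
      · -- x ≥ 2s+2
        have hq0 : x - (2*s+2) ∈ P := hc1c x hx (by omega)
        have hq2 : x - 2*s ∈ P := hc1a x hx (by omega)
        obtain ⟨k, u, hu1, hu2, hform⟩ := ih (x - (2*s+2)) (by omega) hq0
        obtain ⟨k', u', hu1', hu2', hform'⟩ := ih (x - 2*s) (by omega) hq2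
        -- x - 2s = (x - (2s+2)) + 2
        have he : k * (2*s+2) + (s + u + 2) = k' * (2*s+2) + (s + u') := by omega
        have hub : s + u + 2 < 2*s+2 ∨ s + u + 2 ≥ 2*s+2 := by omega
        rcases hub with hub | hub
        · exact ⟨k + 1, u, hu1, hu2, by
            have : (k+1) * (2*s+2) = k * (2*s+2) + (2*s+2) := by ring
            omega⟩
        · -- s + u + 2 ≥ 2s+2 means u ≥ s, contradiction with u ≤ s - 1
          omega

/-- Descent lemma. -/
lemma band_descent (hs : 0 < s) {P : Finset ℕ} (hP : PCond s P) :
    ∀ k u, 1 ≤ u → u ≤ s - 1 → (k+1) * (2*s+2) + s + u ∈ P →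
      (k * (2*s+2) + s + u ∈ P ∧ k * (2*s+2) + s + (u+1) ∈ P ∧
       k * (2*s+2) + s + (u+2) ∈ P ∧ u + 2 ≤ s - 1) := by
  obtain ⟨hmin, hc1a, hc1b, hc1c, hc2a, hc2b, hc2c⟩ := hP
  intro k u hu1 hu2 hx
  set x := (k+1) * (2*s+2) + s + u with hxdef
  have hee : (k+1) * (2*s+2) = k * (2*s+2) + (2*s+2) := by ring
  have h0 : x - (2*s+2) ∈ P := hc1c x hx (by omega)
  have h1 : x - (2*s+1) ∈ P := hc1b x hx (by omega)
  have h2 : x - (2*s) ∈ P := hc1a x hx (by omega)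
  have e0 : x - (2*s+2) = k * (2*s+2) + s + u := by omega
  have e1 : x - (2*s+1) = k * (2*s+2) + s + (u+1) := by omega
  have e2 : x - (2*s) = k * (2*s+2) + s + (u+2) := by omega
  rw [e0] at h0; rw [e1] at h1; rw [e2] at h2
  refine ⟨h0, h1, h2, ?_⟩
  -- the band form of x - 2s forces u + 2 ≤ s - 1
  obtain ⟨k'', u'', hu1'', hu2'', hform''⟩ := band_form hs
    ⟨hmin, hc1a, hc1b, hc1c, hc2a, hc2b, hc2c⟩ _ h2
  have hb := BU (n := 2*s+2) (a := k) (b := k'') (c := s + (u+2)) (d := s + u'')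
    (by omega) (by omega) (by omega) (by omega)
  omega

/-- Iterated descent. -/
lemma band_down (hs : 0 < s) {P : Finset ℕ} (hP : PCond s P) :
    ∀ u, 1 ≤ u → u ≤ s - 1 → ∀ k, k * (2*s+2) + s + u ∈ P →
      ∀ k', k' ≤ k → k' * (2*s+2) + s + u ∈ P := by
  intro u hu1 hu2 k
  induction k with
  | zero =>
    intro hx k' hk'
    have : k' = 0 := by omega
    rwa [this]
  | succ k ih =>
    intro hx k' hk'
    rcases Nat.eq_or_lt_of_le hk' with rfl | hlt
    · exact hx
    · exact ih (band_descent hs hP k u hu1 hu2 hx).1 k' (by omega)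

/-- Bound on the level. -/
lemma band_kbound {P : Finset ℕ} {k u : ℕ} (hs : 0 < s) (hP : PCond s P)
    (hu1 : 1 ≤ u) (hu2 : u ≤ s - 1) (hx : k * (2*s+2) + s + u ∈ P) : k < P.card := by
  have hsub : (Finset.range (k+1)).image (fun k' => k' * (2*s+2) + s + u) ⊆ P := by
    intro q hq
    obtain ⟨k', hk', rfl⟩ := Finset.mem_image.1 hq
    rw [Finset.mem_range] at hk'
    exact band_down hs hP u hu1 hu2 k hx k' (by omega)
  have hcard := Finset.card_le_card hsub
  rw [Finset.card_image_of_injective, Finset.card_range] at hcard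
  · omega
  · intro a b hab
    simp only at hab
    have := BU (n := 2*s+2) (a := a) (b := b) (c := s+u) (d := s+u)
      (by omega) (by omega) (by omega) (by omega)
    omega

variable (s)

/-- The multiplicity function of an arm set. -/
def mFun (P : Finset ℕ) (u : ℕ) : ℕ :=
  ((Finset.range (P.card + 1)).filter (fun k => k * (2*s+2) + s + u ∈ P)).card

/-- The arm set built from a multiplicity function. -/
def Pst (m : ℕ → ℕ) : Finset ℕ :=
  (Finset.Icc 1 (s-1)).biUnion (fun u => (Finset.range (m u)).image (fun k => k * (2*s+2) + s + u))

variable {s}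

lemma mem_Pst {m : ℕ → ℕ} {x : ℕ} :
    x ∈ Pst s m ↔ ∃ u, 1 ≤ u ∧ u ≤ s - 1 ∧ ∃ k, k < m u ∧ x = k * (2*s+2) + s + u := by
  simp only [Pst, Finset.mem_biUnion, Finset.mem_Icc, Finset.mem_image, Finset.mem_range]
  constructor
  · rintro ⟨u, ⟨h1, h2⟩, k, hk, rfl⟩
    exact ⟨u, h1, h2, k, hk, rfl⟩
  · rintro ⟨u, h1, h2, k, hk, rfl⟩
    exact ⟨u, ⟨h1, h2⟩, k, hk, rfl⟩

lemma Pst_congr {m m' : ℕ → ℕ} (h : ∀ u, 1 ≤ u → u ≤ s - 1 → m u = m' u) :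
    Pst s m = Pst s m' := by
  apply Finset.ext
  intro x
  rw [mem_Pst, mem_Pst]
  constructor
  · rintro ⟨u, h1, h2, k, hk, rfl⟩
    exact ⟨u, h1, h2, k, by rw [← h u h1 h2]; exact hk, rfl⟩
  · rintro ⟨u, h1, h2, k, hk, rfl⟩
    exact ⟨u, h1, h2, k, by rw [h u h1 h2]; exact hk, rfl⟩

/-- For a valid arm set, the filter defining `mFun` is an initial segment. -/
lemma mFun_filter_lower (hs : 0 < s) {P : Finset ℕ} (hP : PCond s P) {u : ℕ}
    (hu1 : 1 ≤ u) (hu2 : u ≤ s - 1) (k : ℕ) :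
    k < mFun s P u ↔ k * (2*s+2) + s + u ∈ P := by
  have hlower : ∀ a b, a ≤ b →
      b ∈ ((Finset.range (P.card + 1)).filter (fun k => k * (2*s+2) + s + u ∈ P)) →
      a ∈ ((Finset.range (P.card + 1)).filter (fun k => k * (2*s+2) + s + u ∈ P)) := by
    intro a b hab hb
    simp only [Finset.mem_filter, Finset.mem_range] at hb ⊢
    exact ⟨by omega, band_down hs hP u hu1 hu2 b hb.2 a hab⟩
  rw [mFun, ← lower_mem_iff hlower]
  simp only [Finset.mem_filter, Finset.mem_range]
  constructor
  · rintro ⟨_, h⟩; exact h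
  · intro h
    exact ⟨by have := band_kbound hs hP hu1 hu2 h; omega, h⟩

/-- Necessity: a valid arm set is determined by its multiplicity function. -/
lemma necessity_eq (hs : 0 < s) {P : Finset ℕ} (hP : PCond s P) :
    P = Pst s (mFun s P) := by
  apply Finset.ext
  intro x
  rw [mem_Pst]
  constructor
  · intro hx
    obtain ⟨k, u, hu1, hu2, rfl⟩ := band_form hs hP x hx
    exact ⟨u, hu1, hu2, k, (mFun_filter_lower hs hP hu1 hu2 k).2 hx, rfl⟩
  · rintro ⟨u, hu1, hu2, k, hk, rfl⟩
    exact (mFun_filter_lower hs hP hu1 hu2 k).1 hk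

/-- Necessity: the multiplicity function satisfies the tower conditions. -/
lemma necessity_E (hs : 0 < s) {P : Finset ℕ} (hP : PCond s P) :
    (∀ u, 1 ≤ u → u ≤ s-1 → s-2 ≤ u → mFun s P u ≤ 1) ∧
    (∀ u, 1 ≤ u → u + 1 ≤ s-1 → mFun s P u ≤ mFun s P (u+1) + 1) ∧
    (∀ u, 1 ≤ u → u + 2 ≤ s-1 → mFun s P u ≤ mFun s P (u+2) + 1) := by
  refine ⟨?_, ?_, ?_⟩
  · intro u hu1 hu2 hu3
    by_contra hc
    push_neg at hc
    have h1 : 1 < mFun s P u := hc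
    have := (mFun_filter_lower hs hP hu1 hu2 1).1 h1
    have := (band_descent hs hP 0 u hu1 hu2 (by
      have e : (0+1) * (2*s+2) + s + u = 1 * (2*s+2) + s + u := by ring_nf
      rw [e]; exact this)).2.2.2
    omega
  · intro u hu1 hu2
    by_contra hc
    push_neg at hc
    set k := mFun s P (u+1) with hk
    have h1 : k + 1 < mFun s P u := by omega
    have h2 := (mFun_filter_lower hs hP hu1 (by omega) (k+1)).1 h1
    have h3 := (band_descent hs hP k u hu1 (by omega) h2).2.1
    have h4 := (mFun_filter_lower hs hP (by omega : 1 ≤ u+1) hu2 k).2 h3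
    omega
  · intro u hu1 hu2
    by_contra hc
    push_neg at hc
    set k := mFun s P (u+2) with hk
    have h1 : k + 1 < mFun s P u := by omega
    have h2 := (mFun_filter_lower hs hP hu1 (by omega) (k+1)).1 h1
    have h3 := (band_descent hs hP k u hu1 (by omega) h2).2.2.1
    have h4 := (mFun_filter_lower hs hP (by omega : 1 ≤ u+2) hu2 k).2 h3
    omega

end Classification

/-! ### Sufficiency: towers give valid arm sets -/

section Sufficiency

variable {s : ℕ}

/-- The tower-condition bundle for a multiplicity function. -/
def ECond (s : ℕ) (m : ℕ → ℕ) : Prop :=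
  (∀ u, 1 ≤ u → u ≤ s-1 → s-2 ≤ u → m u ≤ 1) ∧
  (∀ u, 1 ≤ u → u + 1 ≤ s-1 → m u ≤ m (u+1) + 1) ∧
  (∀ u, 1 ≤ u → u + 2 ≤ s-1 → m u ≤ m (u+2) + 1)

lemma tower_bound (hs : 0 < s) {m : ℕ → ℕ} (hE : ECond s m) :
    ∀ k u, 1 ≤ u → u ≤ s - 1 → k < m u → u + 2 * k ≤ s - 1 := by
  obtain ⟨hE1, hE2, hE3⟩ := hE
  intro k
  induction k with
  | zero => intro u h1 h2 _; omega
  | succ k ih =>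
    intro u h1 h2 hk
    have hm2 : 2 ≤ m u := by omega
    have hu3 : u + 2 ≤ s - 1 := by
      by_contra hc
      have := hE1 u h1 h2 (by omega)
      omega
    have hk' : k < m (u + 2) := by
      have := hE3 u h1 hu3
      omega
    have := ih (u+2) (by omega) hu3 hk'
    omega

lemma sufficiency_PCond (hs : 0 < s) {m : ℕ → ℕ} (hE : ECond s m) : PCond s (Pst s m) := by
  obtain ⟨hE1, hE2, hE3⟩ := hE
  have hbound := tower_bound hs ⟨hE1, hE2, hE3⟩
  constructor
  · -- min condition
    intro x hx
    obtain ⟨u, hu1, hu2, k, hk, rfl⟩ := mem_Pst.1 hx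
    omega
  refine ⟨?_, ?_, ?_, ?_, ?_, ?_⟩
  -- CondOne 2s
  · intro x hx ht
    obtain ⟨u, hu1, hu2, k, hk, rfl⟩ := mem_Pst.1 hx
    have hee : ∀ j : ℕ, (j+1) * (2*s+2) = j * (2*s+2) + (2*s+2) := fun j => by ring
    have hkpos : 1 ≤ k := by
      by_contra hc
      push_neg at hc
      interval_cases k
      omega
    obtain ⟨k', rfl⟩ : ∃ k', k = k' + 1 := ⟨k - 1, by omega⟩
    have hu3 : u + 2 ≤ s - 1 := by
      by_contra hc
      have := hE1 u hu1 hu2 (by omega)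
      omega
    apply mem_Pst.2
    refine ⟨u + 2, by omega, by omega, k', ?_, by
      have := hee k'
      omega⟩
    have := hE3 u hu1 hu3
    omega
  -- CondOne 2s+1
  · intro x hx ht
    obtain ⟨u, hu1, hu2, k, hk, rfl⟩ := mem_Pst.1 hx
    have hee : ∀ j : ℕ, (j+1) * (2*s+2) = j * (2*s+2) + (2*s+2) := fun j => by ring
    have hkpos : 1 ≤ k := by
      by_contra hc
      push_neg at hc
      interval_cases k
      omega
    obtain ⟨k', rfl⟩ : ∃ k', k = k' + 1 := ⟨k - 1, by omega⟩
    have hu3 : u + 2 ≤ s - 1 := by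
      by_contra hc
      have := hE1 u hu1 hu2 (by omega)
      omega
    apply mem_Pst.2
    refine ⟨u + 1, by omega, by omega, k', ?_, by
      have := hee k'
      omega⟩
    have := hE2 u hu1 (by omega)
    omega
  -- CondOne 2s+2
  · intro x hx ht
    obtain ⟨u, hu1, hu2, k, hk, rfl⟩ := mem_Pst.1 hx
    have hee : ∀ j : ℕ, (j+1) * (2*s+2) = j * (2*s+2) + (2*s+2) := fun j => by ring
    have hkpos : 1 ≤ k := by
      by_contra hc
      push_neg at hc
      interval_cases k
      omega
    obtain ⟨k', rfl⟩ : ∃ k', k = k' + 1 := ⟨k - 1, by omega⟩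
    apply mem_Pst.2
    exact ⟨u, hu1, hu2, k', by omega, by
      have := hee k'
      omega⟩
  -- CondTwo 2s
  · intro x hx y hy
    obtain ⟨u, hu1, hu2, k, hk, rfl⟩ := mem_Pst.1 hx
    obtain ⟨v, hv1, hv2, l, hl, rfl⟩ := mem_Pst.1 hy
    have hbu := hbound k u hu1 hu2 hk
    have hbv := hbound l v hv1 hv2 hl
    have hee : (k+l+1) * (2*s) + (2*(k+l) + u + v + 1)
        = (k * (2*s+2) + s + u) + (l * (2*s+2) + s + v) + 1 := by ring
    rw [← hee]
    apply NDIV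
    · omega
    · omega
  -- CondTwo 2s+1
  · intro x hx y hy
    obtain ⟨u, hu1, hu2, k, hk, rfl⟩ := mem_Pst.1 hx
    obtain ⟨v, hv1, hv2, l, hl, rfl⟩ := mem_Pst.1 hy
    have hbu := hbound k u hu1 hu2 hk
    have hbv := hbound l v hv1 hv2 hl
    have hee : (k+l+1) * (2*s+1) + ((k+l) + u + v)
        = (k * (2*s+2) + s + u) + (l * (2*s+2) + s + v) + 1 := by ring
    rw [← hee]
    apply NDIV
    · omega
    · omega
  -- CondTwo 2s+2
  · intro x hx y hy
    obtain ⟨u, hu1, hu2, k, hk, rfl⟩ := mem_Pst.1 hx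
    obtain ⟨v, hv1, hv2, l, hl, rfl⟩ := mem_Pst.1 hy
    have hbu := hbound k u hu1 hu2 hk
    have hbv := hbound l v hv1 hv2 hl
    have hee : (k+l+1) * (2*s+2) + (u + v - 1)
        = (k * (2*s+2) + s + u) + (l * (2*s+2) + s + v) + 1 := by
      have : (k+l+1) * (2*s+2) = k * (2*s+2) + l * (2*s+2) + (2*s+2) := by ring
      omega
    rw [← hee]
    apply NDIV
    · omega
    · omega

lemma sufficiency_mFun (hs : 0 < s) {m : ℕ → ℕ} (hE : ECond s m) :
    ∀ u, 1 ≤ u → u ≤ s - 1 → mFun s (Pst s m) u = m u := by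
  intro u hu1 hu2
  have hmem : ∀ k, (k * (2*s+2) + s + u ∈ Pst s m) ↔ k < m u := by
    intro k
    constructor
    · intro h
      obtain ⟨u', hu1', hu2', k', hk', he⟩ := mem_Pst.1 h
      obtain ⟨hkk, huu⟩ := BU (n := 2*s+2) (a := k) (b := k') (c := s + u) (d := s + u')
        (by omega) (by omega) (by omega) (by omega)
      have : u' = u := by omega
      subst this
      omega
    · intro h
      exact mem_Pst.2 ⟨u, hu1, hu2, k, h, rfl⟩
  have hmu : m u ≤ (Pst s m).card := by
    have hsub : (Finset.range (m u)).image (fun k => k * (2*s+2) + s + u) ⊆ Pst s m := by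
      intro q hq
      obtain ⟨k, hk, rfl⟩ := Finset.mem_image.1 hq
      rw [Finset.mem_range] at hk
      exact (hmem k).2 hk
    have := Finset.card_le_card hsub
    rw [Finset.card_image_of_injective, Finset.card_range] at this
    · exact this
    · intro a b hab
      simp only at hab
      have := BU (n := 2*s+2) (a := a) (b := b) (c := s+u) (d := s+u)
        (by omega) (by omega) (by omega) (by omega)
      omega
  rw [mFun]
  have : (Finset.range ((Pst s m).card + 1)).filter (fun k => k * (2*s+2) + s + u ∈ Pst s m)
      = Finset.range (m u) := by
    apply Finset.ext
    intro k
    simp only [Finset.mem_filter, Finset.mem_range]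
    constructor
    · rintro ⟨_, h⟩; exact (hmem k).1 h
    · intro h
      exact ⟨by omega, (hmem k).2 h⟩
  rw [this, Finset.card_range]

end Sufficiency

/-! ### Bridging cap-sequences and tower conditions -/

/-- Virtual value sequence: two initial state values followed by the list. -/
def pval (a b : ℕ) (l : List ℕ) : ℕ → ℕ
  | 0 => a
  | 1 => b
  | (i+2) => l.getD i 0

lemma CapSeq_cons {a b v : ℕ} {t : List ℕ} :
    CapSeq a b (v :: t) ↔ v ≤ min a b + 1 ∧ CapSeq b v t := Iff.rfl

lemma pval_shift (a b v : ℕ) (t : List ℕ) (i : ℕ) :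
    pval a b (v :: t) (i+1) = pval b v t i := by
  match i with
  | 0 => rfl
  | 1 => rfl
  | (i+2) => simp [pval]

lemma capseq_iff : ∀ (l : List ℕ) (a b : ℕ), CapSeq a b l ↔
    ∀ i < l.length, l.getD i 0 ≤ min (pval a b l (i+1)) (pval a b l i) + 1 := by
  intro l
  induction l with
  | nil => intro a b; simp [CapSeq]
  | cons v t ih =>
    intro a b
    rw [CapSeq_cons, ih b v]
    constructor
    · rintro ⟨h1, h2⟩ i hi
      cases i with
      | zero =>
        show (v :: t).getD 0 0 ≤ min (pval a b (v::t) 1) (pval a b (v::t) 0) + 1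
        have : min a b = min b a := Nat.min_comm a b
        simp only [List.getD_cons_zero, pval]
        omega
      | succ i =>
        have hi' : i < t.length := by simpa using hi
        have := h2 i hi'
        rw [pval_shift, pval_shift]
        simpa using this
    · intro h
      constructor
      · have := h 0 (by simp)
        simp only [List.getD_cons_zero, pval] at this
        omega
      · intro i hi
        have := h (i+1) (by simpa using hi)
        rw [pval_shift, pval_shift] at this
        simpa using this

section Bridge

variable (s : ℕ)

/-- The multiplicity function encoded by a list. -/
def mOfL (l : List ℕ) (u : ℕ) : ℕ :=
  if 1 ≤ u ∧ u ≤ s-1 then l.getD (s-1-u) 0 else 0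

variable {s}

lemma mOfL_in {l : List ℕ} {u : ℕ} (h1 : 1 ≤ u) (h2 : u ≤ s-1) :
    mOfL s l u = l.getD (s-1-u) 0 := if_pos ⟨h1, h2⟩

lemma pval_two (a b : ℕ) (l : List ℕ) (i : ℕ) : pval a b l (i+2) = l.getD i 0 := rfl

lemma bridge {l : List ℕ} (hlen : l.length = s - 1) (hs : 0 < s) :
    CapSeq 0 0 l ↔ ECond s (mOfL s l) := by
  rw [capseq_iff]
  constructor
  · intro h
    refine ⟨?_, ?_, ?_⟩
    · -- E1
      intro u h1 h2 h3
      have hi : s-1-u < l.length := by omega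
      have hC := h (s-1-u) hi
      rw [mOfL_in h1 h2]
      rcases Nat.eq_or_lt_of_le h3 with heq | hlt
      · -- u = s - 2, index i = 1 (possible only if s ≥ 3)
        have hieq : s-1-u = 1 := by omega
        rw [hieq] at hC
        have : pval 0 0 l 1 = 0 := rfl
        rw [hieq]
        omega
      · -- u = s - 1, index i = 0
        have hieq : s-1-u = 0 := by omega
        rw [hieq] at hC
        have h0 : pval 0 0 l 0 = 0 := rfl
        have h1' : pval 0 0 l 1 = 0 := rfl
        rw [hieq]
        omega
    · -- E2
      intro u h1 h2
      have hi : s-1-u < l.length := by omega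
      have hC := h (s-1-u) hi
      rw [mOfL_in h1 (by omega), mOfL_in (by omega : 1 ≤ u+1) h2]
      have hge : 1 ≤ s-1-u := by omega
      have e1 : s-1-u+1 = (s-1-u-1)+2 := by omega
      rw [e1, pval_two] at hC
      have e2 : s-1-u-1 = s-1-(u+1) := by omega
      rw [e2] at hC
      omega
    · -- E3
      intro u h1 h2
      have hi : s-1-u < l.length := by omega
      have hC := h (s-1-u) hi
      rw [mOfL_in h1 (by omega), mOfL_in (by omega : 1 ≤ u+2) h2]
      have hge : 2 ≤ s-1-u := by omega
      have e1 : s-1-u = (s-1-u-2)+2 := by omega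
      rw [show pval 0 0 l (s-1-u) = pval 0 0 l ((s-1-u-2)+2) by rw [← e1], pval_two] at hC
      have e2 : s-1-u-2 = s-1-(u+2) := by omega
      rw [e2] at hC
      omega
  · intro hE i hi
    obtain ⟨hE1, hE2, hE3⟩ := hE
    rw [hlen] at hi
    set u := s-1-i with hu
    have hu1 : 1 ≤ u := by omega
    have hu2 : u ≤ s-1 := by omega
    have hmd : l.getD i 0 = mOfL s l u := by
      rw [mOfL_in hu1 hu2]
      congr 1
      omega
    rcases Nat.lt_or_ge i 2 with hsmall | hbig
    · -- i = 0 or 1 : use E1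
      have hm1 : mOfL s l u ≤ 1 := hE1 u hu1 hu2 (by omega)
      interval_cases i
      · have h0 : pval 0 0 l 0 = 0 := rfl
        have h1 : pval 0 0 l 1 = 0 := rfl
        omega
      · have h1 : pval 0 0 l 1 = 0 := rfl
        rw [show (1:ℕ)+1 = 0+2 by omega, pval_two]
        omega
    · -- i ≥ 2 : use E2 and E3
      have e1 : i + 1 = (i-1) + 2 := by omega
      have e2 : i = (i-2) + 2 := by omega
      rw [e1, pval_two, show pval 0 0 l i = pval 0 0 l ((i-2)+2) by rw [← e2], pval_two]
      have hv1 : l.getD (i-1) 0 = mOfL s l (u+1) := by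
        rw [mOfL_in (by omega : 1 ≤ u+1) (by omega)]
        congr 1
        omega
      have hv2 : l.getD (i-2) 0 = mOfL s l (u+2) := by
        rw [mOfL_in (by omega : 1 ≤ u+2) (by omega)]
        congr 1
        omega
      have hh2 := hE2 u hu1 (by omega)
      have hh3 := hE3 u hu1 (by omega)
      omega

end Bridge

/-! ### Final assembly -/

section Assembly

variable (s : ℕ)

/-- The predicate from the main theorem. -/
def Phi (p : YPartition) : Prop :=
  p.IsSelfConjugate ∧
  p.IsCore (2 * s) ∧ p.IsCore (2 * s + 1) ∧ p.IsCore (2 * s + 2) ∧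
  ∀ j, 1 ≤ j → j ≤ s → (2 * j - 1) ∉ p.MD

/-- Encoding a partition as a list. -/
noncomputable def encL (p : YPartition) : List ℕ :=
  List.ofFn (fun i : Fin (s-1) => mFun s p.PF (s-1-i.val))

variable {s}

lemma length_encL (p : YPartition) : (encL s p).length = s - 1 := by
  rw [encL, List.length_ofFn]

lemma getD_encL (p : YPartition) {i : ℕ} (h : i < s-1) :
    (encL s p).getD i 0 = mFun s p.PF (s-1-i) := by
  rw [List.getD_eq_getElem _ _ (by rw [length_encL]; exact h)]
  simp only [encL, List.getElem_ofFn]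

lemma mOfL_encL (p : YPartition) {u : ℕ} (h1 : 1 ≤ u) (h2 : u ≤ s-1) :
    mOfL s (encL s p) u = mFun s p.PF u := by
  rw [mOfL_in h1 h2, getD_encL p (show s-1-u < s-1 by omega)]
  congr 1
  omega

lemma Phi_iff (hs : 0 < s) (p : YPartition) :
    Phi s p ↔ (p.IsSelfConjugate ∧ PCond s p.PF) := by
  constructor
  · rintro ⟨hsc, hc1, hc2, hc3, hmd⟩
    obtain ⟨ha1, ha2⟩ := (YPartition.isCore_iff hsc (by omega : 0 < 2*s)).1 hc1
    obtain ⟨hb1, hb2⟩ := (YPartition.isCore_iff hsc (by omega : 0 < 2*s+1)).1 hc2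
    obtain ⟨hd1, hd2⟩ := (YPartition.isCore_iff hsc (by omega : 0 < 2*s+2)).1 hc3
    exact ⟨hsc, (YPartition.md_iff hsc s).1 hmd, ha1, hb1, hd1, ha2, hb2, hd2⟩
  · rintro ⟨hsc, hmin, ha1, hb1, hd1, ha2, hb2, hd2⟩
    exact ⟨hsc,
      (YPartition.isCore_iff hsc (by omega : 0 < 2*s)).2 ⟨ha1, ha2⟩,
      (YPartition.isCore_iff hsc (by omega : 0 < 2*s+1)).2 ⟨hb1, hb2⟩,
      (YPartition.isCore_iff hsc (by omega : 0 < 2*s+2)).2 ⟨hd1, hd2⟩,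
      (YPartition.md_iff hsc s).2 hmin⟩

lemma encL_mem (hs : 0 < s) {p : YPartition} (hp : Phi s p) :
    encL s p ∈ MLst (s-1) 0 0 := by
  obtain ⟨hsc, hPC⟩ := (Phi_iff hs p).1 hp
  obtain ⟨hN1, hN2, hN3⟩ := necessity_E hs hPC
  rw [MLst_mem]
  refine ⟨length_encL p, ?_⟩
  rw [bridge (length_encL p) hs]
  refine ⟨?_, ?_, ?_⟩
  · intro u h1 h2 h3
    rw [mOfL_encL p h1 h2]
    exact hN1 u h1 h2 h3
  · intro u h1 h2
    rw [mOfL_encL p h1 (by omega), mOfL_encL p (by omega : 1 ≤ u+1) h2]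
    exact hN2 u h1 h2
  · intro u h1 h2
    rw [mOfL_encL p h1 (by omega), mOfL_encL p (by omega : 1 ≤ u+2) h2]
    exact hN3 u h1 h2

lemma decP_phi (hs : 0 < s) {l : List ℕ} (hl : l ∈ MLst (s-1) 0 0) :
    Phi s (YPartition.ofFinset (Pst s (mOfL s l))) := by
  obtain ⟨hlen, hcs⟩ := (MLst_mem (s-1) 0 0 l).1 hl
  have hE : ECond s (mOfL s l) := (bridge hlen hs).1 hcs
  have hPC := sufficiency_PCond hs hE
  have hsc := YPartition.ofFinset_selfConjugate (Pst s (mOfL s l))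
  apply (Phi_iff hs _).2
  refine ⟨hsc, ?_⟩
  rw [YPartition.ofFinset_PF]
  exact hPC

lemma left_inv_lemma (hs : 0 < s) {p : YPartition} (hp : Phi s p) :
    YPartition.ofFinset (Pst s (mOfL s (encL s p))) = p := by
  obtain ⟨hsc, hPC⟩ := (Phi_iff hs p).1 hp
  have h1 : Pst s (mOfL s (encL s p)) = Pst s (mFun s p.PF) :=
    Pst_congr (fun u hu1 hu2 => mOfL_encL p hu1 hu2)
  rw [h1, ← necessity_eq hs hPC, ← YPartition.eq_ofFinset hsc]

lemma right_inv_lemma (hs : 0 < s) {l : List ℕ} (hl : l ∈ MLst (s-1) 0 0) :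
    encL s (YPartition.ofFinset (Pst s (mOfL s l))) = l := by
  obtain ⟨hlen, hcs⟩ := (MLst_mem (s-1) 0 0 l).1 hl
  have hE : ECond s (mOfL s l) := (bridge hlen hs).1 hcs
  apply List.ext_getElem
  · rw [length_encL, hlen]
  · intro i hi hi'
    rw [length_encL] at hi
    have e1 : (encL s (YPartition.ofFinset (Pst s (mOfL s l)))).getD i 0
        = mFun s (YPartition.ofFinset (Pst s (mOfL s l))).PF (s-1-i) := getD_encL _ hi
    rw [List.getD_eq_getElem _ _ (by rw [length_encL]; exact hi)] at e1
    rw [e1, YPartition.ofFinset_PF, sufficiency_mFun hs hE (s-1-i) (by omega) (by omega),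
      mOfL_in (by omega : 1 ≤ s-1-i) (by omega)]
    rw [List.getD_eq_getElem _ _ (by omega : s-1-(s-1-i) < l.length)]
    congr 1
    omega

/-- The main bijection. -/
noncomputable def mainEquiv (hs : 0 < s) :
    {p : YPartition // Phi s p} ≃ {l : List ℕ // l ∈ MLst (s-1) 0 0} where
  toFun := fun q => ⟨encL s q.1, encL_mem hs q.2⟩
  invFun := fun q => ⟨YPartition.ofFinset (Pst s (mOfL s q.1)), decP_phi hs q.2⟩
  left_inv := fun q => Subtype.ext (left_inv_lemma hs q.2)
  right_inv := fun q => Subtype.ext (right_inv_lemma hs q.2)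

end Assembly

/-- For every positive integer `s`, the number of self-conjugate
`(2s, 2s+1, 2s+2)`-core partitions `p` such that none of `1, 3, …, 2s-1` belongs
to `MD(p)` is the Motzkin number `M_s`. -/

theorem count_selfConjugate_no_small_diag (s : ℕ) (hs : 0 < s) :
    Nat.card {p : YPartition // p.IsSelfConjugate ∧
        p.IsCore (2 * s) ∧ p.IsCore (2 * s + 1) ∧ p.IsCore (2 * s + 2) ∧
        ∀ j, 1 ≤ j → j ≤ s → (2 * j - 1) ∉ p.MD} =
      motzkin s := by
  rw [motzkin_eq_Gcnt, ← FG_final s hs, ← MLst_card (s-1) 0 0, ← Nat.card_eq_finsetCard]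
  exact Nat.card_congr (mainEquiv hs)
end
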